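/- arXiv:1702.04783 — 7 statements merged into one kernel-verified Lean document; each statement's English description precedes it below -/
import Mathlib

section
/- Fix i ∈ {1,…,k} and an integer T ≥ 1. For every real β > 0, the virtual queue process satisfies (1/T)·Σ_{t=0}^{T−1} g_{t,i}(X_t) ≤ Q_i(T+1)/T + G²/(4β) + (β/T)·Σ_{t=1}^{T} ‖X_t − X_{t−1}‖². -/
open scoped RealInnerProductSpace

/-- **Virtual queue bound (Lemma 2).**  Fix `i ∈ {1,…,k}` and an integer `T ≥ 1`.  For every
real `β > 0`, the virtual queue process satisfies
`(1/T)·Σ_{t=0}^{T−1} g_{t,i}(X_t) ≤ Q_i(T+1)/T + G²/(4β) + (β/T)·Σ_{t=1}^{T} ‖X_t − X_{t−1}‖²`.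
Here slot `t ∈ {1,2,…}` of the paper's queue update `Q_i(t+1) = max[Q_i(t) + g_{t−1,i}(X_{t−1})
+ g_{t−1,i}'(X_{t−1})ᵀ(X_t − X_{t−1}), 0]` is encoded with `t = τ+1`, `τ ∈ {0,1,…}`. -/
theorem stmt1 (n k : ℕ) (hk : 0 < k)
    (𝒳 : Set (EuclideanSpace ℝ (Fin n)))
    (h_ne : 𝒳.Nonempty) (h_cpt : IsCompact 𝒳) (h_cvx : Convex ℝ 𝒳)
    (D F G : ℝ) (hD : 0 ≤ D) (hF : 0 ≤ F) (hG : 0 ≤ G)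
    (hdiam : ∀ x ∈ 𝒳, ∀ y ∈ 𝒳, ‖x - y‖ ≤ D)
    (f : ℕ → EuclideanSpace ℝ (Fin n) → ℝ)
    (g : ℕ → Fin k → EuclideanSpace ℝ (Fin n) → ℝ)
    (hfconv : ∀ t, ConvexOn ℝ 𝒳 (f t))
    (hgconv : ∀ t i, ConvexOn ℝ 𝒳 (g t i))
    (hfbd : ∀ t, ∀ x ∈ 𝒳, |f t x| ≤ F)
    (hgbd : ∀ t i, ∀ x ∈ 𝒳, |g t i x| ≤ F)
    (f' : ℕ → EuclideanSpace ℝ (Fin n) → EuclideanSpace ℝ (Fin n))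
    (g' : ℕ → Fin k → EuclideanSpace ℝ (Fin n) → EuclideanSpace ℝ (Fin n))
    (hfsub : ∀ t, ∀ x ∈ 𝒳, ∀ y ∈ 𝒳, f t x + ⟪f' t x, y - x⟫ ≤ f t y)
    (hgsub : ∀ t i, ∀ x ∈ 𝒳, ∀ y ∈ 𝒳, g t i x + ⟪g' t i x, y - x⟫ ≤ g t i y)
    (hf'bd : ∀ t, ∀ x ∈ 𝒳, ‖f' t x‖ ≤ G)
    (hg'bd : ∀ t i, ∀ x ∈ 𝒳, ‖g' t i x‖ ≤ G)
    (X : ℕ → EuclideanSpace ℝ (Fin n)) (hX : ∀ t, X t ∈ 𝒳)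
    (Q : ℕ → Fin k → ℝ)
    (hQ0 : ∀ i, Q 0 i = 0) (hQ1 : ∀ i, Q 1 i = 0)
    (hQrec : ∀ t i, Q (t + 2) i =
      max (Q (t + 1) i + g t i (X t) + ⟪g' t i (X t), X (t + 1) - X t⟫) 0)
    (i : Fin k) (T : ℕ) (hT : 1 ≤ T) (β : ℝ) (hβ : 0 < β) :
    (1 / (T : ℝ)) * ∑ t ∈ Finset.range T, g t i (X t) ≤
      Q (T + 1) i / (T : ℝ) + G ^ 2 / (4 * β) +
        (β / (T : ℝ)) * ∑ t ∈ Finset.range T, ‖X (t + 1) - X t‖ ^ 2 := by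
  have hTpos : (0:ℝ) < T := by exact_mod_cast hT
  have key : ∀ t, g t i (X t) ≤ Q (t + 2) i - Q (t + 1) i +
      (G ^ 2 / (4 * β) + β * ‖X (t + 1) - X t‖ ^ 2) := by
    intro t
    have h1 : Q (t + 1) i + g t i (X t) + ⟪g' t i (X t), X (t + 1) - X t⟫ ≤ Q (t + 2) i := by
      rw [hQrec t i]; exact le_max_left _ _
    have h2 : -⟪g' t i (X t), X (t + 1) - X t⟫ ≤ G * ‖X (t + 1) - X t‖ := by
      have := abs_real_inner_le_norm (g' t i (X t)) (X (t + 1) - X t)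
      have hb := hg'bd t i (X t) (hX t)
      have hn : (0:ℝ) ≤ ‖X (t + 1) - X t‖ := norm_nonneg _
      nlinarith [neg_abs_le (⟪g' t i (X t), X (t + 1) - X t⟫)]
    have h3 : G * ‖X (t + 1) - X t‖ ≤ G ^ 2 / (4 * β) + β * ‖X (t + 1) - X t‖ ^ 2 := by
      rw [div_add' _ _ _ (by positivity), le_div_iff₀ (by positivity)]
      nlinarith [sq_nonneg (2 * β * ‖X (t + 1) - X t‖ - G)]
    linarith
  have hsum : ∑ t ∈ Finset.range T, g t i (X t) ≤
      Q (T + 1) i + T * (G ^ 2 / (4 * β)) + β * ∑ t ∈ Finset.range T, ‖X (t + 1) - X t‖ ^ 2 := by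
    have htel : ∑ t ∈ Finset.range T, (Q (t + 2) i - Q (t + 1) i) = Q (T + 1) i - Q 1 i := by
      have := Finset.sum_range_sub (fun t => Q (t + 1) i) T
      simpa using this
    calc ∑ t ∈ Finset.range T, g t i (X t)
        ≤ ∑ t ∈ Finset.range T, (Q (t + 2) i - Q (t + 1) i +
            (G ^ 2 / (4 * β) + β * ‖X (t + 1) - X t‖ ^ 2)) :=
          Finset.sum_le_sum (fun t _ => key t)
      _ = (Q (T + 1) i - Q 1 i) + T * (G ^ 2 / (4 * β)) +
            β * ∑ t ∈ Finset.range T, ‖X (t + 1) - X t‖ ^ 2 := by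
          rw [Finset.sum_add_distrib, Finset.sum_add_distrib, htel, Finset.sum_const,
            Finset.mul_sum]
          simp [Finset.card_range]; ring
      _ = Q (T + 1) i + T * (G ^ 2 / (4 * β)) +
            β * ∑ t ∈ Finset.range T, ‖X (t + 1) - X t‖ ^ 2 := by rw [hQ1]; ring
  have : (1 / (T:ℝ)) * ∑ t ∈ Finset.range T, g t i (X t) ≤
      (1 / (T:ℝ)) * (Q (T + 1) i + T * (G ^ 2 / (4 * β)) +
        β * ∑ t ∈ Finset.range T, ‖X (t + 1) - X t‖ ^ 2) :=
    mul_le_mul_of_nonneg_left hsum (by positivity)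
  calc (1 / (T:ℝ)) * ∑ t ∈ Finset.range T, g t i (X t)
      ≤ (1 / (T:ℝ)) * (Q (T + 1) i + T * (G ^ 2 / (4 * β)) +
        β * ∑ t ∈ Finset.range T, ‖X (t + 1) - X t‖ ^ 2) := this
    _ = Q (T + 1) i / (T : ℝ) + G ^ 2 / (4 * β) +
        (β / (T : ℝ)) * ∑ t ∈ Finset.range T, ‖X (t + 1) - X t‖ ^ 2 := by
        field_simp
end

section
/- (Sample path drift-plus-penalty bound) Suppose the decisions are produced by the algorithm with parameters V > 0 and α > 0. Then for every vector y ∈ 𝒳 and every slot t ∈ {1,2,3,…}: Δ(t) + (α/2)‖X_t − X_{t−1}‖² ≤ B + V·f_{t−1}(y) − V·f_{t−1}(X_{t−1}) + α‖y − X_{t−1}‖² − α‖y − X_t‖² + Σ_{i=1}^k Q_i(t)·g_{t−1,i}(y) + V²G²/(2α), where B = k(F + GD)²/2. -/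
open scoped RealInnerProductSpace

lemma strong_min {E : Type*} [NormedAddCommGroup E] [InnerProductSpace ℝ E]
    {𝒳 : Set E} (hcvx : Convex ℝ 𝒳) {P x0 xp : E} (hxp : xp ∈ 𝒳) {α : ℝ} (hα : 0 < α)
    (hmin : ∀ x ∈ 𝒳, ⟪P, xp⟫ + α * ‖xp - x0‖ ^ 2 ≤ ⟪P, x⟫ + α * ‖x - x0‖ ^ 2)
    {y : E} (hy : y ∈ 𝒳) :
    ⟪P, xp⟫ + α * ‖xp - x0‖ ^ 2 + α * ‖y - xp‖ ^ 2 ≤ ⟪P, y⟫ + α * ‖y - x0‖ ^ 2 := by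
  set d := y - xp with hd
  have hstep : ∀ l : ℝ, 0 < l → l ≤ 1 →
      -(α * l * ‖d‖ ^ 2) ≤ ⟪P, d⟫ + 2 * α * ⟪xp - x0, d⟫ := by
    intro l hl hl1
    have heq : xp + l • d = (1 - l) • xp + l • y := by rw [hd]; module
    have hz : xp + l • d ∈ 𝒳 := by
      rw [heq]; exact hcvx hxp hy (by linarith) hl.le (by ring)
    have h2 := hmin _ hz
    have hinner : ⟪P, xp + l • d⟫ = ⟪P, xp⟫ + l * ⟪P, d⟫ := by
      rw [inner_add_right, real_inner_smul_right]
    have hnorm : ‖xp + l • d - x0‖ ^ 2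
        = ‖xp - x0‖ ^ 2 + 2 * l * ⟪xp - x0, d⟫ + l ^ 2 * ‖d‖ ^ 2 := by
      have h3 : xp + l • d - x0 = (xp - x0) + l • d := by abel
      rw [h3, norm_add_sq_real, real_inner_smul_right, norm_smul, Real.norm_eq_abs,
        abs_of_pos hl, mul_pow]
      ring
    rw [hinner, hnorm] at h2
    have h4 : 0 ≤ l * (⟪P, d⟫ + 2 * α * ⟪xp - x0, d⟫ + α * l * ‖d‖ ^ 2) := by nlinarith
    have h5 : 0 ≤ ⟪P, d⟫ + 2 * α * ⟪xp - x0, d⟫ + α * l * ‖d‖ ^ 2 := by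
      by_contra hneg; push_neg at hneg; nlinarith
    linarith
  have hkey : 0 ≤ ⟪P, d⟫ + 2 * α * ⟪xp - x0, d⟫ := by
    by_contra hc; push_neg at hc
    set c := ⟪P, d⟫ + 2 * α * ⟪xp - x0, d⟫ with hcdef
    have hd2 : (0:ℝ) ≤ α * ‖d‖ ^ 2 := by positivity
    set l := min 1 (-c / (α * ‖d‖ ^ 2 + 1)) with hldef
    have hl0 : 0 < l := lt_min one_pos (div_pos (by linarith) (by positivity))
    have hl1 : l ≤ 1 := min_le_left _ _
    have hl2 : l ≤ -c / (α * ‖d‖ ^ 2 + 1) := min_le_right _ _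
    have hmain := hstep l hl0 hl1
    have hlt : α * l * ‖d‖ ^ 2 < -c := by
      have h6 : α * l * ‖d‖ ^ 2 ≤ (α * ‖d‖ ^ 2) * (-c / (α * ‖d‖ ^ 2 + 1)) := by
        nlinarith
      have h7 : (α * ‖d‖ ^ 2) * (-c / (α * ‖d‖ ^ 2 + 1)) < -c := by
        rw [mul_div_assoc', div_lt_iff₀ (by positivity)]
        nlinarith
      linarith
    linarith
  have hy' : xp + d = y := by rw [hd]; abel
  have e1 : ⟪P, y⟫ = ⟪P, xp⟫ + ⟪P, d⟫ := by rw [← hy', inner_add_right]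
  have e2 : ‖y - x0‖ ^ 2 = ‖xp - x0‖ ^ 2 + 2 * ⟪xp - x0, d⟫ + ‖d‖ ^ 2 := by
    have h3 : y - x0 = (xp - x0) + d := by rw [← hy']; try abel
    rw [h3, norm_add_sq_real]; try ring
  have e3 : ‖y - xp‖ ^ 2 = ‖d‖ ^ 2 := rfl
  rw [e1, e2, e3]
  nlinarith [hkey]

set_option maxHeartbeats 1000000 in
/-- **Sample path drift-plus-penalty bound (Lemma 4).**  If the decisions are produced by the
algorithm with parameters `V > 0` and `α > 0`, then for every `y ∈ 𝒳` and every slot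
`t ∈ {1,2,3,…}` (encoded as `t = τ+1`):
`Δ(t) + (α/2)‖X_t − X_{t−1}‖² ≤ B + V f_{t−1}(y) − V f_{t−1}(X_{t−1}) + α‖y − X_{t−1}‖²
  − α‖y − X_t‖² + Σ_{i=1}^k Q_i(t) g_{t−1,i}(y) + V²G²/(2α)`, with `B = k(F + GD)²/2`. -/
theorem stmt3 (n k : ℕ) (hk : 0 < k)
    (𝒳 : Set (EuclideanSpace ℝ (Fin n)))
    (h_ne : 𝒳.Nonempty) (h_cpt : IsCompact 𝒳) (h_cvx : Convex ℝ 𝒳)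
    (D F G : ℝ) (hD : 0 ≤ D) (hF : 0 ≤ F) (hG : 0 ≤ G)
    (hdiam : ∀ x ∈ 𝒳, ∀ y ∈ 𝒳, ‖x - y‖ ≤ D)
    (f : ℕ → EuclideanSpace ℝ (Fin n) → ℝ)
    (g : ℕ → Fin k → EuclideanSpace ℝ (Fin n) → ℝ)
    (hfconv : ∀ t, ConvexOn ℝ 𝒳 (f t))
    (hgconv : ∀ t i, ConvexOn ℝ 𝒳 (g t i))
    (hfbd : ∀ t, ∀ x ∈ 𝒳, |f t x| ≤ F)
    (hgbd : ∀ t i, ∀ x ∈ 𝒳, |g t i x| ≤ F)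
    (f' : ℕ → EuclideanSpace ℝ (Fin n) → EuclideanSpace ℝ (Fin n))
    (g' : ℕ → Fin k → EuclideanSpace ℝ (Fin n) → EuclideanSpace ℝ (Fin n))
    (hfsub : ∀ t, ∀ x ∈ 𝒳, ∀ y ∈ 𝒳, f t x + ⟪f' t x, y - x⟫ ≤ f t y)
    (hgsub : ∀ t i, ∀ x ∈ 𝒳, ∀ y ∈ 𝒳, g t i x + ⟪g' t i x, y - x⟫ ≤ g t i y)
    (hf'bd : ∀ t, ∀ x ∈ 𝒳, ‖f' t x‖ ≤ G)
    (hg'bd : ∀ t i, ∀ x ∈ 𝒳, ‖g' t i x‖ ≤ G)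
    (X : ℕ → EuclideanSpace ℝ (Fin n)) (hX : ∀ t, X t ∈ 𝒳)
    (Q : ℕ → Fin k → ℝ)
    (hQ0 : ∀ i, Q 0 i = 0) (hQ1 : ∀ i, Q 1 i = 0)
    (hQrec : ∀ t i, Q (t + 2) i =
      max (Q (t + 1) i + g t i (X t) + ⟪g' t i (X t), X (t + 1) - X t⟫) 0)
    (V α : ℝ) (hV : 0 < V) (hα : 0 < α)
    (halg : ∀ t, ∀ x ∈ 𝒳,
      ⟪V • f' t (X t) + ∑ i, Q (t + 1) i • g' t i (X t), X (t + 1)⟫ +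
          α * ‖X (t + 1) - X t‖ ^ 2 ≤
        ⟪V • f' t (X t) + ∑ i, Q (t + 1) i • g' t i (X t), x⟫ + α * ‖x - X t‖ ^ 2)
    (L : ℕ → ℝ) (hL : ∀ t, L t = (1 / 2) * ∑ i, (Q t i) ^ 2)
    (B : ℝ) (hB : B = (k : ℝ) * (F + G * D) ^ 2 / 2) :
    ∀ t : ℕ, ∀ y ∈ 𝒳,
      L (t + 2) - L (t + 1) + (α / 2) * ‖X (t + 1) - X t‖ ^ 2 ≤
        B + V * f t y - V * f t (X t) + α * ‖y - X t‖ ^ 2 - α * ‖y - X (t + 1)‖ ^ 2 +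
          (∑ i, Q (t + 1) i * g t i y) + V ^ 2 * G ^ 2 / (2 * α) := by
  intro t y hy
  -- nonnegativity of queues
  have hq : ∀ i, 0 ≤ Q (t + 1) i := by
    intro i
    cases t with
    | zero => rw [hQ1]
    | succ s => rw [hQrec]; exact le_max_right _ _
  -- bound on the linearized constraint
  have hgt : ∀ i, |g t i (X t) + ⟪g' t i (X t), X (t + 1) - X t⟫| ≤ F + G * D := by
    intro i
    have h1 : |g t i (X t)| ≤ F := hgbd t i _ (hX t)
    have h2 : |⟪g' t i (X t), X (t + 1) - X t⟫| ≤ G * D := by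
      calc |⟪g' t i (X t), X (t + 1) - X t⟫| ≤ ‖g' t i (X t)‖ * ‖X (t + 1) - X t‖ :=
            abs_real_inner_le_norm _ _
        _ ≤ G * D := mul_le_mul (hg'bd t i _ (hX t)) (hdiam _ (hX (t + 1)) _ (hX t))
            (norm_nonneg _) hG
    calc |g t i (X t) + ⟪g' t i (X t), X (t + 1) - X t⟫|
        ≤ |g t i (X t)| + |⟪g' t i (X t), X (t + 1) - X t⟫| := abs_add_le _ _
      _ ≤ F + G * D := add_le_add h1 h2
  -- per-coordinate drift bound
  have hQi : ∀ i, Q (t + 2) i ^ 2 ≤ Q (t + 1) i ^ 2 +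
      2 * (Q (t + 1) i * (g t i (X t) + ⟪g' t i (X t), X (t + 1) - X t⟫)) + (F + G * D) ^ 2 := by
    intro i
    rw [hQrec t i]
    set a := Q (t + 1) i + g t i (X t) + ⟪g' t i (X t), X (t + 1) - X t⟫ with ha
    have h1 : (max a 0) ^ 2 ≤ a ^ 2 := by
      have := le_abs_self a
      have h0 : (0:ℝ) ≤ max a 0 := le_max_right _ _
      have h2 : max a 0 ≤ |a| := max_le (le_abs_self a) (abs_nonneg a)
      calc (max a 0) ^ 2 ≤ |a| ^ 2 := by nlinarith
        _ = a ^ 2 := sq_abs a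
    have h3 := abs_le.mp (hgt i)
    have h4 : a ^ 2 = Q (t + 1) i ^ 2 +
        2 * (Q (t + 1) i * (g t i (X t) + ⟪g' t i (X t), X (t + 1) - X t⟫)) +
        (g t i (X t) + ⟪g' t i (X t), X (t + 1) - X t⟫) ^ 2 := by rw [ha]; ring
    have h5 : (g t i (X t) + ⟪g' t i (X t), X (t + 1) - X t⟫) ^ 2 ≤ (F + G * D) ^ 2 := by
      nlinarith [h3.1, h3.2]
    linarith
  have hsum : ∑ i, Q (t + 2) i ^ 2 ≤ (∑ i, Q (t + 1) i ^ 2) +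
      2 * (∑ i, Q (t + 1) i * (g t i (X t) + ⟪g' t i (X t), X (t + 1) - X t⟫)) +
      (k : ℝ) * (F + G * D) ^ 2 := by
    calc ∑ i, Q (t + 2) i ^ 2
        ≤ ∑ i, (Q (t + 1) i ^ 2 +
            2 * (Q (t + 1) i * (g t i (X t) + ⟪g' t i (X t), X (t + 1) - X t⟫)) +
            (F + G * D) ^ 2) := Finset.sum_le_sum fun i _ => hQi i
      _ = (∑ i, Q (t + 1) i ^ 2) +
          2 * (∑ i, Q (t + 1) i * (g t i (X t) + ⟪g' t i (X t), X (t + 1) - X t⟫)) +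
          (k : ℝ) * (F + G * D) ^ 2 := by
          rw [Finset.sum_add_distrib, Finset.sum_add_distrib, Finset.sum_const,
            Finset.card_univ, Fintype.card_fin, ← Finset.mul_sum, nsmul_eq_mul]
  -- rewrite the linearized sum
  have hsplit : ∑ i, Q (t + 1) i * (g t i (X t) + ⟪g' t i (X t), X (t + 1) - X t⟫)
      = (∑ i, Q (t + 1) i * g t i (X t)) +
        (∑ i, Q (t + 1) i * ⟪g' t i (X t), X (t + 1)⟫) -
        (∑ i, Q (t + 1) i * ⟪g' t i (X t), X t⟫) := by
    rw [← Finset.sum_add_distrib, ← Finset.sum_sub_distrib]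
    refine Finset.sum_congr rfl fun i _ => ?_
    rw [inner_sub_right]; ring
  have hdrift : L (t + 2) - L (t + 1) ≤
      (∑ i, Q (t + 1) i * g t i (X t)) +
      (∑ i, Q (t + 1) i * ⟪g' t i (X t), X (t + 1)⟫) -
      (∑ i, Q (t + 1) i * ⟪g' t i (X t), X t⟫) + B := by
    rw [hL, hL, hB]
    rw [hsplit] at hsum
    linarith
  -- strong minimizer inequality
  have hstrong := strong_min h_cvx (hX (t + 1)) hα (halg t) hy
  have expand : ∀ v : EuclideanSpace ℝ (Fin n),
      ⟪V • f' t (X t) + ∑ i, Q (t + 1) i • g' t i (X t), v⟫ =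
        V * ⟪f' t (X t), v⟫ + ∑ i, Q (t + 1) i * ⟪g' t i (X t), v⟫ := by
    intro v
    rw [inner_add_left, real_inner_smul_left, sum_inner]
    congr 1
    exact Finset.sum_congr rfl fun i _ => real_inner_smul_left _ _ _
  rw [expand (X (t + 1)), expand y] at hstrong
  -- subgradient inequalities
  have hfy : V * f t (X t) + V * ⟪f' t (X t), y⟫ - V * ⟪f' t (X t), X t⟫ ≤ V * f t y := by
    have h := hfsub t (X t) (hX t) y hy
    rw [inner_sub_right] at h
    nlinarith [mul_le_mul_of_nonneg_left h hV.le]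
  have hgy : (∑ i, Q (t + 1) i * g t i (X t)) +
      (∑ i, Q (t + 1) i * ⟪g' t i (X t), y⟫) -
      (∑ i, Q (t + 1) i * ⟪g' t i (X t), X t⟫) ≤ ∑ i, Q (t + 1) i * g t i y := by
    rw [← Finset.sum_add_distrib, ← Finset.sum_sub_distrib]
    refine Finset.sum_le_sum fun i _ => ?_
    have h := hgsub t i (X t) (hX t) y hy
    rw [inner_sub_right] at h
    nlinarith [mul_le_mul_of_nonneg_left h (hq i)]
  -- penalty term bound
  have hc : V * ⟪f' t (X t), X t⟫ - V * ⟪f' t (X t), X (t + 1)⟫ -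
      (α / 2) * ‖X (t + 1) - X t‖ ^ 2 ≤ V ^ 2 * G ^ 2 / (2 * α) := by
    have h1 : |⟪f' t (X t), X (t + 1) - X t⟫| ≤ G * ‖X (t + 1) - X t‖ := by
      calc |⟪f' t (X t), X (t + 1) - X t⟫| ≤ ‖f' t (X t)‖ * ‖X (t + 1) - X t‖ :=
            abs_real_inner_le_norm _ _
        _ ≤ G * ‖X (t + 1) - X t‖ :=
            mul_le_mul_of_nonneg_right (hf'bd t _ (hX t)) (norm_nonneg _)
    rw [inner_sub_right] at h1
    have h2 := abs_le.mp h1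
    have h3 : V * G * ‖X (t + 1) - X t‖ - (α / 2) * ‖X (t + 1) - X t‖ ^ 2 ≤
        V ^ 2 * G ^ 2 / (2 * α) := by
      rw [le_div_iff₀ (by positivity : (0:ℝ) < 2 * α)]
      nlinarith [sq_nonneg (V * G - α * ‖X (t + 1) - X t‖)]
    have h4 : V * (⟪f' t (X t), X t⟫ - ⟪f' t (X t), X (t + 1)⟫) ≤
        V * (G * ‖X (t + 1) - X t‖) :=
      mul_le_mul_of_nonneg_left (by linarith [h2.1]) hV.le
    linarith [h3, h4]
  linarith [hdrift, hstrong, hfy, hgy, hc]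
end

section
/- (Objective function bound) Suppose the decisions are produced by the algorithm with parameters V > 0 and α > 0, and suppose x ∈ 𝒳 satisfies g_{t,i}(x) ≤ 0 for all i ∈ {1,…,k} and all t ≥ 0. Then for all integers T ≥ 1: (1/T)·Σ_{t=0}^{T−1} f_t(X_t) ≤ (1/T)·Σ_{t=0}^{T−1} f_t(x) + B/V + VG²/(2α) + αD²/(VT), where B = k(F + GD)²/2. -/
set_option maxHeartbeats 1000000


open scoped RealInnerProductSpace

/-- **Objective function bound (Theorem 1).**  Suppose the decisions are produced by the
algorithm with parameters `V > 0`, `α > 0`, and `x ∈ 𝒳` satisfies `g_{t,i}(x) ≤ 0` for all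
`i` and `t`.  Then for all integers `T ≥ 1`:
`(1/T)·Σ_{t=0}^{T−1} f_t(X_t) ≤ (1/T)·Σ_{t=0}^{T−1} f_t(x) + B/V + VG²/(2α) + αD²/(VT)`,
where `B = k(F + GD)²/2`. -/
theorem stmt4 (n k : ℕ) (hk : 0 < k)
    (𝒳 : Set (EuclideanSpace ℝ (Fin n)))
    (h_ne : 𝒳.Nonempty) (h_cpt : IsCompact 𝒳) (h_cvx : Convex ℝ 𝒳)
    (D F G : ℝ) (hD : 0 ≤ D) (hF : 0 ≤ F) (hG : 0 ≤ G)
    (hdiam : ∀ x ∈ 𝒳, ∀ y ∈ 𝒳, ‖x - y‖ ≤ D)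
    (f : ℕ → EuclideanSpace ℝ (Fin n) → ℝ)
    (g : ℕ → Fin k → EuclideanSpace ℝ (Fin n) → ℝ)
    (hfconv : ∀ t, ConvexOn ℝ 𝒳 (f t))
    (hgconv : ∀ t i, ConvexOn ℝ 𝒳 (g t i))
    (hfbd : ∀ t, ∀ x ∈ 𝒳, |f t x| ≤ F)
    (hgbd : ∀ t i, ∀ x ∈ 𝒳, |g t i x| ≤ F)
    (f' : ℕ → EuclideanSpace ℝ (Fin n) → EuclideanSpace ℝ (Fin n))
    (g' : ℕ → Fin k → EuclideanSpace ℝ (Fin n) → EuclideanSpace ℝ (Fin n))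
    (hfsub : ∀ t, ∀ x ∈ 𝒳, ∀ y ∈ 𝒳, f t x + ⟪f' t x, y - x⟫ ≤ f t y)
    (hgsub : ∀ t i, ∀ x ∈ 𝒳, ∀ y ∈ 𝒳, g t i x + ⟪g' t i x, y - x⟫ ≤ g t i y)
    (hf'bd : ∀ t, ∀ x ∈ 𝒳, ‖f' t x‖ ≤ G)
    (hg'bd : ∀ t i, ∀ x ∈ 𝒳, ‖g' t i x‖ ≤ G)
    (X : ℕ → EuclideanSpace ℝ (Fin n)) (hX : ∀ t, X t ∈ 𝒳)
    (Q : ℕ → Fin k → ℝ)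
    (hQ0 : ∀ i, Q 0 i = 0) (hQ1 : ∀ i, Q 1 i = 0)
    (hQrec : ∀ t i, Q (t + 2) i =
      max (Q (t + 1) i + g t i (X t) + ⟪g' t i (X t), X (t + 1) - X t⟫) 0)
    (V α : ℝ) (hV : 0 < V) (hα : 0 < α)
    (halg : ∀ t, ∀ x ∈ 𝒳,
      ⟪V • f' t (X t) + ∑ i, Q (t + 1) i • g' t i (X t), X (t + 1)⟫ +
          α * ‖X (t + 1) - X t‖ ^ 2 ≤
        ⟪V • f' t (X t) + ∑ i, Q (t + 1) i • g' t i (X t), x⟫ + α * ‖x - X t‖ ^ 2)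
    (B : ℝ) (hB : B = (k : ℝ) * (F + G * D) ^ 2 / 2)
    (x : EuclideanSpace ℝ (Fin n)) (hx : x ∈ 𝒳)
    (hxfeas : ∀ t i, g t i x ≤ 0) :
    ∀ T : ℕ, 1 ≤ T →
      (1 / (T : ℝ)) * ∑ t ∈ Finset.range T, f t (X t) ≤
        (1 / (T : ℝ)) * ∑ t ∈ Finset.range T, f t x +
          B / V + V * G ^ 2 / (2 * α) + α * D ^ 2 / (V * T) := by

  -- queue values are nonnegative from time 1 on
  have hQnn : ∀ t i, 0 ≤ Q (t + 1) i := by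
    intro t i
    cases t with
    | zero => exact (hQ1 i).ge
    | succ s => rw [hQrec]; exact le_max_right _ _
  have hdX : ∀ s r : ℕ, ‖X s - X r‖ ≤ D := fun s r => hdiam _ (hX s) _ (hX r)
  set L : ℕ → ℝ := fun s => (∑ i, (Q s i) ^ 2) / 2 with hLdef
  -- bound on the linearized constraint value
  have hgtb : ∀ t i, |g t i (X t) + ⟪g' t i (X t), X (t+1) - X t⟫| ≤ F + G * D := by
    intro t i
    have h1 := hgbd t i (X t) (hX t)
    have h2 : |⟪g' t i (X t), X (t+1) - X t⟫| ≤ G * D :=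
      le_trans (abs_real_inner_le_norm _ _)
        (mul_le_mul (hg'bd t i _ (hX t)) (hdX (t+1) t) (norm_nonneg _) hG)
    calc |g t i (X t) + ⟪g' t i (X t), X (t+1) - X t⟫|
        ≤ |g t i (X t)| + |⟪g' t i (X t), X (t+1) - X t⟫| := abs_add_le _ _
      _ ≤ F + G * D := add_le_add h1 h2
  -- drift bound
  have hdrift : ∀ t, L (t+2) - L (t+1) ≤
      (∑ i, Q (t+1) i * (g t i (X t) + ⟪g' t i (X t), X (t+1) - X t⟫)) + B := by
    intro t
    have hsum : ∑ i, (Q (t+2) i)^2 ≤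
        ∑ i, ((Q (t+1) i)^2 + 2 * (Q (t+1) i * (g t i (X t) + ⟪g' t i (X t), X (t+1) - X t⟫))
          + (F + G*D)^2) := by
      refine Finset.sum_le_sum fun i _ => ?_
      set a := g t i (X t) + ⟪g' t i (X t), X (t+1) - X t⟫ with hadef
      have ha : |a| ≤ F + G * D := by rw [hadef]; exact hgtb t i
      have ha2 : a^2 ≤ (F + G*D)^2 := sq_le_sq' (by linarith [(abs_le.mp ha).1]) (abs_le.mp ha).2
      rw [hQrec]
      have hassoc : Q (t+1) i + g t i (X t) + ⟪g' t i (X t), X (t + 1) - X t⟫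
          = Q (t+1) i + a := by rw [hadef]; ring
      rw [hassoc]
      have hm : (max (Q (t+1) i + a) 0)^2 ≤ (Q (t+1) i + a)^2 := by
        rcases le_or_gt (Q (t+1) i + a) 0 with h | h
        · rw [max_eq_right h]; simpa using sq_nonneg (Q (t+1) i + a)
        · rw [max_eq_left h.le]
      nlinarith [hm, ha2]
    have hsplit : ∑ i, ((Q (t+1) i)^2 + 2 * (Q (t+1) i * (g t i (X t) + ⟪g' t i (X t), X (t+1) - X t⟫))
          + (F + G*D)^2)
        = (∑ i, (Q (t+1) i)^2)
          + 2 * (∑ i, Q (t+1) i * (g t i (X t) + ⟪g' t i (X t), X (t+1) - X t⟫))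
          + (k : ℝ) * (F + G*D)^2 := by
      rw [Finset.sum_add_distrib, Finset.sum_add_distrib, ← Finset.mul_sum,
        Finset.sum_const, Finset.card_univ]
      simp [nsmul_eq_mul]
    rw [hsplit] at hsum
    simp only [hLdef]
    rw [hB]
    linarith
  -- key per-step inequality
  have key : ∀ t, V * f t (X t) + (L (t+2) - L (t+1)) ≤
      V * f t x + B + V^2*G^2/(4*α) + α*(‖x - X t‖^2 - ‖x - X (t+1)‖^2) := by
    intro t
    set c := V • f' t (X t) + ∑ i, Q (t + 1) i • g' t i (X t) with hc
    set u := X (t+1) - X t with hu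
    set w := x - X (t+1) with hw
    -- first-order optimality of X (t+1)
    have hstep : ∀ lam : ℝ, 0 < lam → lam ≤ 1 →
        0 ≤ ⟪c, w⟫ + 2*α*⟪u, w⟫ + α*lam*‖w‖^2 := by
      intro lam h0 h1
      have hz : X (t+1) + lam • w ∈ 𝒳 := by
        have hmem := h_cvx (hX (t+1)) hx (by linarith : (0:ℝ) ≤ 1 - lam) h0.le (by ring)
        have heq : (1 - lam) • X (t+1) + lam • x = X (t+1) + lam • w := by
          rw [hw]; module
        rwa [heq] at hmem
      have h := halg t _ hz
      rw [← hc] at h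
      have e1 : ⟪c, X (t+1) + lam • w⟫ = ⟪c, X (t+1)⟫ + lam * ⟪c, w⟫ := by
        rw [inner_add_right, real_inner_smul_right]
      have hz1 : X (t+1) + lam • w - X t = u + lam • w := by rw [hu]; abel
      have e2 : ‖X (t+1) + lam • w - X t‖^2 = ‖u‖^2 + 2*(lam*⟪u,w⟫) + lam^2*‖w‖^2 := by
        rw [hz1, norm_add_sq_real, real_inner_smul_right, norm_smul, mul_pow,
          Real.norm_eq_abs, sq_abs]
      rw [e1, e2, ← hu] at h
      have h2 : 0 ≤ lam * (⟪c, w⟫ + 2*α*⟪u, w⟫ + α*lam*‖w‖^2) := by nlinarith [h]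
      by_contra hA
      push_neg at hA
      nlinarith [mul_pos h0 (neg_pos.mpr hA)]
    have fo : 0 ≤ ⟪c, w⟫ + 2*α*⟪u, w⟫ := by
      have hAll : ∀ ε : ℝ, 0 < ε → (0:ℝ) ≤ (⟪c, w⟫ + 2*α*⟪u, w⟫) + ε := by
        intro ε hε
        have hden : (0:ℝ) < α*‖w‖^2 + 1 := by positivity
        set lam := min 1 (ε / (α*‖w‖^2 + 1)) with hlam
        have h0 : 0 < lam := lt_min one_pos (div_pos hε hden)
        have h1 : lam ≤ 1 := min_le_left _ _
        have hs := hstep lam h0 h1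
        have hl2 : lam ≤ ε / (α*‖w‖^2 + 1) := min_le_right _ _
        have hb1 : α*lam*‖w‖^2 ≤ (ε / (α*‖w‖^2 + 1)) * (α*‖w‖^2) := by
          nlinarith [mul_le_mul_of_nonneg_right hl2 (show (0:ℝ) ≤ α*‖w‖^2 by positivity)]
        have hb2 : (ε / (α*‖w‖^2 + 1)) * (α*‖w‖^2) ≤ ε := by
          rw [div_mul_eq_mul_div, div_le_iff₀ hden]
          nlinarith [sq_nonneg ‖w‖]
        linarith
      linarith [le_of_forall_pos_le_add hAll]
    -- strong optimality inequality
    have hstrong : ⟪c, X (t+1) - x⟫ ≤ α*‖x - X t‖^2 - α*‖u‖^2 - α*‖w‖^2 := by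
      have hxXt : x - X t = w + u := by rw [hw, hu]; abel
      have e : ‖x - X t‖^2 = ‖w‖^2 + 2*⟪w,u⟫ + ‖u‖^2 := by rw [hxXt, norm_add_sq_real]
      have hsym : ⟪u,w⟫ = ⟪w,u⟫ := real_inner_comm _ _
      have hneg : ⟪c, X (t+1) - x⟫ = -⟪c, w⟫ := by
        rw [hw, ← inner_neg_right]; congr 1; abel
      rw [hsym] at fo
      rw [hneg, e]
      nlinarith [fo]
    -- subgradient inequality for f
    have hfs := hfsub t (X t) (hX t) x hx
    have hfdir : ⟪f' t (X t), X t - x⟫ = -⟪f' t (X t), x - X t⟫ := by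
      rw [← inner_neg_right]; congr 1; abel
    -- per-constraint bound using feasibility of x
    have hgi : ∀ i, g t i (X t) + ⟪g' t i (X t), X (t+1) - X t⟫
        ≤ ⟪g' t i (X t), X (t+1) - x⟫ := by
      intro i
      have h1 := hgsub t i (X t) (hX t) x hx
      have h2 := hxfeas t i
      have e : ⟪g' t i (X t), X (t+1) - x⟫
          = ⟪g' t i (X t), X (t+1) - X t⟫ + ⟪g' t i (X t), X t - x⟫ := by
        rw [← inner_add_right]; congr 1; abel
      have e2 : ⟪g' t i (X t), X t - x⟫ = -⟪g' t i (X t), x - X t⟫ := by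
        rw [← inner_neg_right]; congr 1; abel
      rw [e, e2]
      linarith
    have hQg : ∑ i, Q (t+1) i * (g t i (X t) + ⟪g' t i (X t), X (t+1) - X t⟫)
        ≤ ⟪∑ i, Q (t+1) i • g' t i (X t), X (t+1) - x⟫ := by
      rw [sum_inner]
      refine Finset.sum_le_sum fun i _ => ?_
      rw [real_inner_smul_left]
      exact mul_le_mul_of_nonneg_left (hgi i) (hQnn t i)
    have hcdec : ⟪c, X (t+1) - x⟫ = V * ⟪f' t (X t), X (t+1) - x⟫
        + ⟪∑ i, Q (t+1) i • g' t i (X t), X (t+1) - x⟫ := by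
      rw [hc, inner_add_left, real_inner_smul_left]
    have hfdec : ⟪f' t (X t), X t - x⟫ = ⟪f' t (X t), X t - X (t+1)⟫
        + ⟪f' t (X t), X (t+1) - x⟫ := by
      rw [← inner_add_right]; congr 1; abel
    -- Cauchy-Schwarz / AM-GM term
    have hCa : V * ⟪f' t (X t), X t - X (t+1)⟫ ≤ α*‖u‖^2 + V^2*G^2/(4*α) := by
      have h1 : ⟪f' t (X t), X t - X (t+1)⟫ ≤ G * ‖u‖ := by
        calc ⟪f' t (X t), X t - X (t+1)⟫ ≤ ‖f' t (X t)‖ * ‖X t - X (t+1)‖ :=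
              real_inner_le_norm _ _
          _ ≤ G * ‖u‖ := by
              rw [hu, norm_sub_rev]
              exact mul_le_mul_of_nonneg_right (hf'bd t _ (hX t)) (norm_nonneg _)
      have h2 : V * (G * ‖u‖) - α*‖u‖^2 ≤ V^2*G^2/(4*α) := by
        rw [le_div_iff₀ (by positivity : (0:ℝ) < 4*α)]
        nlinarith [sq_nonneg (2*α*‖u‖ - V*G)]
      nlinarith [mul_le_mul_of_nonneg_left h1 hV.le]
    -- combine
    have hfsV : V * f t (X t) - V * f t x ≤
        V * ⟪f' t (X t), X t - X (t+1)⟫ + V * ⟪f' t (X t), X (t+1) - x⟫ := by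
      have hbase : f t (X t) - f t x ≤
          ⟪f' t (X t), X t - X (t+1)⟫ + ⟪f' t (X t), X (t+1) - x⟫ := by
        rw [← hfdec, hfdir]; linarith
      nlinarith [mul_le_mul_of_nonneg_left hbase hV.le]
    have hd := hdrift t
    linarith [hfsV, hd, hQg, hstrong, hCa, hcdec]
  -- summation
  intro T hT
  have hTpos : (0:ℝ) < T := by exact_mod_cast hT
  have hL : ∑ t ∈ Finset.range T, (L (t+2) - L (t+1)) = L (T+1) - L 1 := by
    simpa using Finset.sum_range_sub (fun t => L (t+1)) T
  have hN : ∑ t ∈ Finset.range T, (‖x - X t‖^2 - ‖x - X (t+1)‖^2)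
      = ‖x - X 0‖^2 - ‖x - X T‖^2 :=
    Finset.sum_range_sub' (fun t => ‖x - X t‖^2) T
  have hL1 : L 1 = 0 := by simp [hLdef, hQ1]
  have hLT : 0 ≤ L (T+1) := by
    simp only [hLdef]
    positivity
  have hN0 : ‖x - X 0‖^2 ≤ D^2 := by
    have h := hdiam x hx (X 0) (hX 0)
    nlinarith [norm_nonneg (x - X 0)]
  have hNT : (0:ℝ) ≤ ‖x - X T‖^2 := sq_nonneg _
  have hsumkey := Finset.sum_le_sum (fun t (_ : t ∈ Finset.range T) => key t)
  have hLHS : ∑ t ∈ Finset.range T, (V * f t (X t) + (L (t+2) - L (t+1)))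
      = V * ∑ t ∈ Finset.range T, f t (X t) + (L (T+1) - L 1) := by
    rw [Finset.sum_add_distrib, hL, Finset.mul_sum]
  have hRHS : ∑ t ∈ Finset.range T,
        (V * f t x + B + V^2*G^2/(4*α) + α*(‖x - X t‖^2 - ‖x - X (t+1)‖^2))
      = V * ∑ t ∈ Finset.range T, f t x + (T:ℝ)*B + (T:ℝ)*(V^2*G^2/(4*α))
        + α*(‖x - X 0‖^2 - ‖x - X T‖^2) := by
    rw [Finset.sum_add_distrib, Finset.sum_add_distrib, Finset.sum_add_distrib,
      Finset.sum_const, Finset.sum_const, Finset.card_range, ← Finset.mul_sum,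
      ← Finset.mul_sum, hN]
    push_cast
    ring
  rw [hLHS, hRHS] at hsumkey
  have hmain : V * ∑ t ∈ Finset.range T, f t (X t)
      ≤ V * ∑ t ∈ Finset.range T, f t x + (T:ℝ)*B + (T:ℝ)*(V^2*G^2/(2*α)) + α*D^2 := by
    have hquarter : (T:ℝ)*(V^2*G^2/(4*α)) ≤ (T:ℝ)*(V^2*G^2/(2*α)) := by
      have : V^2*G^2/(4*α) ≤ V^2*G^2/(2*α) := by
        rw [div_le_div_iff₀ (by positivity) (by positivity)]
        nlinarith [sq_nonneg (V*G), hα.le]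
      exact mul_le_mul_of_nonneg_left this hTpos.le
    nlinarith [hsumkey, hL1, hLT, hN0, hNT, hα.le,
      mul_le_mul_of_nonneg_left hN0 hα.le]
  set SX := ∑ t ∈ Finset.range T, f t (X t) with hSX
  set Sx := ∑ t ∈ Finset.range T, f t x with hSx
  have heq : (1/(T:ℝ))*Sx + B/V + V*G^2/(2*α) + α*D^2/(V*(T:ℝ)) - (1/(T:ℝ))*SX
      = (V*Sx + (T:ℝ)*B + (T:ℝ)*(V^2*G^2/(2*α)) + α*D^2 - V*SX) / (V*(T:ℝ)) := by
    field_simp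
  have hnn : 0 ≤ (V*Sx + (T:ℝ)*B + (T:ℝ)*(V^2*G^2/(2*α)) + α*D^2 - V*SX) / (V*(T:ℝ)) :=
    div_nonneg (by linarith) (by positivity)
  linarith [heq ▸ hnn]
end

section
/- (Drift under the Slater condition) Suppose the decisions are produced by the algorithm with parameters V > 0 and α > 0, and suppose the Slater condition holds with constant η > 0 and Slater vector s ∈ 𝒳. Then for every slot t ∈ {1,2,3,…}: Δ(t) ≤ B + RV − η‖Q(t)‖ + α‖s − X_{t−1}‖² − α‖s − X_t‖², where B = k(F + GD)²/2 and R = VG²/(2α) + 2F. -/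
open scoped RealInnerProductSpace

set_option maxHeartbeats 1000000 in
/-- **Drift under the Slater condition (Lemma 5).**  Suppose the decisions are produced by the
algorithm with parameters `V > 0`, `α > 0` and the Slater condition holds with `η > 0` and
Slater vector `s ∈ 𝒳`.  Then for every slot `t ∈ {1,2,3,…}` (encoded as `t = τ+1`):
`Δ(t) ≤ B + RV − η‖Q(t)‖ + α‖s − X_{t−1}‖² − α‖s − X_t‖²`,
where `B = k(F + GD)²/2` and `R = VG²/(2α) + 2F`. -/
theorem stmt5 (n k : ℕ) (hk : 0 < k)
    (𝒳 : Set (EuclideanSpace ℝ (Fin n)))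
    (h_ne : 𝒳.Nonempty) (h_cpt : IsCompact 𝒳) (h_cvx : Convex ℝ 𝒳)
    (D F G : ℝ) (hD : 0 ≤ D) (hF : 0 ≤ F) (hG : 0 ≤ G)
    (hdiam : ∀ x ∈ 𝒳, ∀ y ∈ 𝒳, ‖x - y‖ ≤ D)
    (f : ℕ → EuclideanSpace ℝ (Fin n) → ℝ)
    (g : ℕ → Fin k → EuclideanSpace ℝ (Fin n) → ℝ)
    (hfconv : ∀ t, ConvexOn ℝ 𝒳 (f t))
    (hgconv : ∀ t i, ConvexOn ℝ 𝒳 (g t i))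
    (hfbd : ∀ t, ∀ x ∈ 𝒳, |f t x| ≤ F)
    (hgbd : ∀ t i, ∀ x ∈ 𝒳, |g t i x| ≤ F)
    (f' : ℕ → EuclideanSpace ℝ (Fin n) → EuclideanSpace ℝ (Fin n))
    (g' : ℕ → Fin k → EuclideanSpace ℝ (Fin n) → EuclideanSpace ℝ (Fin n))
    (hfsub : ∀ t, ∀ x ∈ 𝒳, ∀ y ∈ 𝒳, f t x + ⟪f' t x, y - x⟫ ≤ f t y)
    (hgsub : ∀ t i, ∀ x ∈ 𝒳, ∀ y ∈ 𝒳, g t i x + ⟪g' t i x, y - x⟫ ≤ g t i y)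
    (hf'bd : ∀ t, ∀ x ∈ 𝒳, ‖f' t x‖ ≤ G)
    (hg'bd : ∀ t i, ∀ x ∈ 𝒳, ‖g' t i x‖ ≤ G)
    (X : ℕ → EuclideanSpace ℝ (Fin n)) (hX : ∀ t, X t ∈ 𝒳)
    (Q : ℕ → Fin k → ℝ)
    (hQ0 : ∀ i, Q 0 i = 0) (hQ1 : ∀ i, Q 1 i = 0)
    (hQrec : ∀ t i, Q (t + 2) i =
      max (Q (t + 1) i + g t i (X t) + ⟪g' t i (X t), X (t + 1) - X t⟫) 0)
    (V α : ℝ) (hV : 0 < V) (hα : 0 < α)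
    (halg : ∀ t, ∀ x ∈ 𝒳,
      ⟪V • f' t (X t) + ∑ i, Q (t + 1) i • g' t i (X t), X (t + 1)⟫ +
          α * ‖X (t + 1) - X t‖ ^ 2 ≤
        ⟪V • f' t (X t) + ∑ i, Q (t + 1) i • g' t i (X t), x⟫ + α * ‖x - X t‖ ^ 2)
    (η : ℝ) (hη : 0 < η) (s : EuclideanSpace ℝ (Fin n)) (hs : s ∈ 𝒳)
    (hslater : ∀ t i, g t i s ≤ -η)
    (L : ℕ → ℝ) (hL : ∀ t, L t = (1 / 2) * ∑ i, (Q t i) ^ 2)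
    (B R : ℝ) (hB : B = (k : ℝ) * (F + G * D) ^ 2 / 2)
    (hR : R = V * G ^ 2 / (2 * α) + 2 * F) :
    ∀ t : ℕ, L (t + 2) - L (t + 1) ≤
      B + R * V - η * Real.sqrt (∑ i, (Q (t + 1) i) ^ 2) +
        α * ‖s - X t‖ ^ 2 - α * ‖s - X (t + 1)‖ ^ 2 := by
  intro t
  have hx0 : X t ∈ 𝒳 := hX t
  have hx1 : X (t+1) ∈ 𝒳 := hX (t+1)
  set d : Fin k → ℝ :=
    fun i => g t i (X t) + ⟪g' t i (X t), X (t+1) - X t⟫ with hddef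
  have hQnn : ∀ τ i, 0 ≤ Q (τ+1) i := by
    intro τ i
    cases τ with
    | zero => simp [hQ1]
    | succ σ => rw [hQrec]; exact le_max_right _ _
  have hdist : ‖X (t+1) - X t‖ ≤ D := hdiam _ hx1 _ hx0
  have hdbd : ∀ i, |d i| ≤ F + G * D := by
    intro i
    have h1 : |g t i (X t)| ≤ F := hgbd t i _ hx0
    have h2 : |⟪g' t i (X t), X (t+1) - X t⟫| ≤ G * D :=
      (abs_real_inner_le_norm _ _).trans
        (mul_le_mul (hg'bd t i _ hx0) hdist (norm_nonneg _) hG)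
    calc |d i| ≤ |g t i (X t)| + |⟪g' t i (X t), X (t+1) - X t⟫| := abs_add_le _ _
      _ ≤ F + G * D := add_le_add h1 h2
  have hsum_d_sq : ∑ i, d i ^ 2 ≤ (k:ℝ) * (F + G*D)^2 := by
    calc ∑ i, d i ^ 2 ≤ ∑ _i : Fin k, (F + G*D)^2 :=
          Finset.sum_le_sum (fun i _ =>
            sq_le_sq' (abs_le.mp (hdbd i)).1 (abs_le.mp (hdbd i)).2)
      _ = (k:ℝ) * (F+G*D)^2 := by
          simp [Finset.sum_const, Finset.card_fin, nsmul_eq_mul]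
  -- Step A: drift bound
  have hdrift : L (t+2) - L (t+1) ≤ (∑ i, Q (t+1) i * d i) + B := by
    rw [hL, hL]
    have h1 : ∀ i : Fin k, Q (t+2) i ^ 2
        ≤ Q (t+1) i ^ 2 + (2 * (Q (t+1) i * d i) + d i ^ 2) := by
      intro i
      rw [hQrec t i]
      have hm : ∀ a : ℝ, max a 0 ^ 2 ≤ a ^ 2 := by
        intro a
        rcases le_total a 0 with h | h
        · rw [max_eq_right h]
          simpa using sq_nonneg a
        · rw [max_eq_left h]
      calc max (Q (t+1) i + g t i (X t) + ⟪g' t i (X t), X (t+1) - X t⟫) 0 ^ 2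
          ≤ (Q (t+1) i + g t i (X t) + ⟪g' t i (X t), X (t+1) - X t⟫) ^ 2 := hm _
        _ = Q (t+1) i ^ 2 + (2 * (Q (t+1) i * d i) + d i ^ 2) := by
            simp only [hddef]; ring
    have h2 := Finset.sum_le_sum (s := Finset.univ) (fun i _ => h1 i)
    rw [Finset.sum_add_distrib, Finset.sum_add_distrib, ← Finset.mul_sum] at h2
    rw [hB]
    linarith
  -- abbreviation
  set P := V • f' t (X t) + ∑ i, Q (t + 1) i • g' t i (X t) with hPdef
  have hPexp : ∀ v, ⟪P, v⟫ = V * ⟪f' t (X t), v⟫ + ∑ i, Q (t+1) i * ⟪g' t i (X t), v⟫ := by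
    intro v
    rw [hPdef, inner_add_left, real_inner_smul_left, sum_inner]
    simp only [real_inner_smul_left]
  -- first-order optimality via convex combinations
  have hθineq : ∀ θ : ℝ, 0 < θ → θ ≤ 1 →
      0 ≤ (⟪P, s - X (t+1)⟫ + 2*α*⟪X (t+1) - X t, s - X (t+1)⟫)
            + θ * (α * ‖s - X (t+1)‖^2) := by
    intro θ hθ0 hθ1
    have hmem : X (t+1) + θ • (s - X (t+1)) ∈ 𝒳 := by
      have h := h_cvx hx1 hs (by linarith : (0:ℝ) ≤ 1 - θ) hθ0.le (by ring)
      convert h using 1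
      module
    have h := halg t _ hmem
    rw [← hPdef] at h
    have e1 : ⟪P, X (t+1) + θ • (s - X (t+1))⟫
        = ⟪P, X (t+1)⟫ + θ * ⟪P, s - X (t+1)⟫ := by
      rw [inner_add_right, real_inner_smul_right]
    have e2 : ‖X (t+1) + θ • (s - X (t+1)) - X t‖^2
        = ‖X (t+1) - X t‖^2 + 2*(θ*⟪X (t+1) - X t, s - X (t+1)⟫)
            + θ^2*‖s - X (t+1)‖^2 := by
      have hvec : X (t+1) + θ • (s - X (t+1)) - X t
          = (X (t+1) - X t) + θ • (s - X (t+1)) := by abel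
      rw [hvec, norm_add_sq_real, real_inner_smul_right, norm_smul]
      simp [Real.norm_eq_abs, abs_of_pos hθ0]
      ring
    rw [e1, e2] at h
    have key : 0 ≤ θ * ((⟪P, s - X (t+1)⟫ + 2*α*⟪X (t+1) - X t, s - X (t+1)⟫)
            + θ * (α * ‖s - X (t+1)‖^2)) := by linarith [h]
    by_contra h'
    push_neg at h'
    nlinarith [mul_pos hθ0 (neg_pos.mpr h')]
  have hA : 0 ≤ ⟪P, s - X (t+1)⟫ + 2*α*⟪X (t+1) - X t, s - X (t+1)⟫ := by
    by_contra hneg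
    push_neg at hneg
    set A := ⟪P, s - X (t+1)⟫ + 2*α*⟪X (t+1) - X t, s - X (t+1)⟫ with hAdef
    set C := α * ‖s - X (t+1)‖^2 with hCdef
    have hC : 0 ≤ C := by rw [hCdef]; positivity
    clear_value A C
    have hθ0 : 0 < min 1 (-A/(C+1)) :=
      lt_min one_pos (div_pos (by linarith) (by linarith))
    have h := hθineq _ hθ0 (min_le_left _ _)
    have h1 : min 1 (-A/(C+1)) * C ≤ (-A/(C+1)) * C :=
      mul_le_mul_of_nonneg_right (min_le_right _ _) hC
    have h2 : (-A/(C+1)) * C < -A := by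
      rw [div_mul_eq_mul_div, div_lt_iff₀ (by linarith : (0:ℝ) < C + 1)]
      have e : -A*(C+1) = -A*C + -A := by ring
      linarith
    linarith
  have hid1 : (2:ℝ)*⟪X (t+1) - X t, s - X (t+1)⟫
      = ‖s - X t‖^2 - ‖X (t+1) - X t‖^2 - ‖s - X (t+1)‖^2 := by
    have hvec : s - X t = (X (t+1) - X t) + (s - X (t+1)) := by abel
    rw [hvec, norm_add_sq_real]; ring
  have hfo : ⟪P, X (t+1) - s⟫
      ≤ α * ‖s - X t‖^2 - α*‖X (t+1) - X t‖^2 - α*‖s - X (t+1)‖^2 := by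
    have h3 : ⟪P, X (t+1) - s⟫ = -⟪P, s - X (t+1)⟫ := by
      rw [← inner_neg_right]; congr 1; abel
    rw [h3]
    have h5 : 2*α*⟪X (t+1) - X t, s - X (t+1)⟫
        = α*‖s - X t‖^2 - α*‖X (t+1) - X t‖^2 - α*‖s - X (t+1)‖^2 := by
      linear_combination α * hid1
    linarith [hA, h5]
  -- inner product rearrangements
  have hin1 : ⟪f' t (X t), X (t+1) - s⟫ + ⟪f' t (X t), s - X (t+1)⟫ = 0 := by
    rw [← inner_add_right]
    have : (X (t+1) - s) + (s - X (t+1)) = 0 := by abel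
    rw [this, inner_zero_right]
  have hin2 : ∀ i : Fin k, ⟪g' t i (X t), s - X t⟫ + ⟪g' t i (X t), X (t+1) - s⟫
      = ⟪g' t i (X t), X (t+1) - X t⟫ := by
    intro i
    rw [← inner_add_right]
    congr 1
    abel
  have hsplit : ∑ i, Q (t+1) i * d i
      = (∑ i, Q (t+1) i * (g t i (X t) + ⟪g' t i (X t), s - X t⟫))
        + (⟪P, X (t+1) - s⟫ + V * ⟪f' t (X t), s - X (t+1)⟫) := by
    have term : ∀ i : Fin k, Q (t+1) i * d i
        = Q (t+1) i * (g t i (X t) + ⟪g' t i (X t), s - X t⟫)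
          + Q (t+1) i * ⟪g' t i (X t), X (t+1) - s⟫ := by
      intro i
      have h := hin2 i
      simp only [hddef]
      linear_combination (Q (t+1) i) * h.symm
    rw [Finset.sum_congr rfl (fun i _ => term i), Finset.sum_add_distrib,
      hPexp (X (t+1) - s)]
    linear_combination (-V) * hin1
  -- Slater bound
  have hb1 : ∑ i, Q (t+1) i * (g t i (X t) + ⟪g' t i (X t), s - X t⟫)
      ≤ -η * Real.sqrt (∑ i, Q (t+1) i ^ 2) := by
    have step1 : ∑ i, Q (t+1) i * (g t i (X t) + ⟪g' t i (X t), s - X t⟫)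
        ≤ ∑ i, Q (t+1) i * (-η) :=
      Finset.sum_le_sum fun i _ =>
        mul_le_mul_of_nonneg_left ((hgsub t i (X t) hx0 s hs).trans (hslater t i))
          (hQnn t i)
    have hsq : ∑ i, Q (t+1) i ^ 2 ≤ (∑ i, Q (t+1) i) ^ 2 := by
      have : ∀ i : Fin k, Q (t+1) i ^ 2 ≤ Q (t+1) i * ∑ j, Q (t+1) j := by
        intro i
        have h1 : Q (t+1) i ≤ ∑ j, Q (t+1) j :=
          Finset.single_le_sum (fun j _ => hQnn t j) (Finset.mem_univ i)
        have := mul_le_mul_of_nonneg_left h1 (hQnn t i)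
        nlinarith
      calc ∑ i, Q (t+1) i ^ 2 ≤ ∑ i, Q (t+1) i * ∑ j, Q (t+1) j :=
            Finset.sum_le_sum (fun i _ => this i)
        _ = (∑ i, Q (t+1) i) ^ 2 := by rw [← Finset.sum_mul]; ring
    have step2 : Real.sqrt (∑ i, Q (t+1) i ^ 2) ≤ ∑ i, Q (t+1) i := by
      have hnn : 0 ≤ ∑ i, Q (t+1) i := Finset.sum_nonneg fun i _ => hQnn t i
      calc Real.sqrt (∑ i, Q (t+1) i ^ 2)
          ≤ Real.sqrt ((∑ i, Q (t+1) i) ^ 2) := Real.sqrt_le_sqrt hsq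
        _ = ∑ i, Q (t+1) i := Real.sqrt_sq hnn
    have step3 : η * Real.sqrt (∑ i, Q (t+1) i ^ 2) ≤ η * ∑ i, Q (t+1) i :=
      mul_le_mul_of_nonneg_left step2 hη.le
    calc ∑ i, Q (t+1) i * (g t i (X t) + ⟪g' t i (X t), s - X t⟫)
        ≤ ∑ i, Q (t+1) i * (-η) := step1
      _ = -(η * ∑ i, Q (t+1) i) := by rw [← Finset.sum_mul]; ring
      _ ≤ -η * Real.sqrt (∑ i, Q (t+1) i ^ 2) := by linarith
  -- f-part bound
  have hf2F : ⟪f' t (X t), s - X t⟫ ≤ 2 * F := by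
    have h1 := hfsub t (X t) hx0 s hs
    have h2 := abs_le.mp (hfbd t (X t) hx0)
    have h3 := abs_le.mp (hfbd t s hs)
    linarith
  have hfG : ⟪f' t (X t), X t - X (t+1)⟫ ≤ G * ‖X (t+1) - X t‖ := by
    calc ⟪f' t (X t), X t - X (t+1)⟫ ≤ ‖f' t (X t)‖ * ‖X t - X (t+1)‖ :=
          real_inner_le_norm _ _
      _ ≤ G * ‖X (t+1) - X t‖ := by
          rw [norm_sub_rev]
          exact mul_le_mul_of_nonneg_right (hf'bd t (X t) hx0) (norm_nonneg _)
  have hb3 : V * ⟪f' t (X t), s - X (t+1)⟫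
      ≤ V * (2*F) + V * (G * ‖X (t+1) - X t‖) := by
    have hsplitf : ⟪f' t (X t), s - X (t+1)⟫
        = ⟪f' t (X t), s - X t⟫ + ⟪f' t (X t), X t - X (t+1)⟫ := by
      rw [← inner_add_right]; congr 1; abel
    rw [hsplitf]
    calc V * (⟪f' t (X t), s - X t⟫ + ⟪f' t (X t), X t - X (t+1)⟫)
        ≤ V * (2*F + G * ‖X (t+1) - X t‖) :=
          mul_le_mul_of_nonneg_left (add_le_add hf2F hfG) hV.le
      _ = V * (2*F) + V * (G * ‖X (t+1) - X t‖) := by ring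
  have hyoung : V*(G*‖X (t+1) - X t‖) - α*‖X (t+1) - X t‖^2 ≤ V^2*G^2/(4*α) := by
    rw [le_div_iff₀ (by linarith : (0:ℝ) < 4*α)]
    nlinarith [sq_nonneg (2*α*‖X (t+1) - X t‖ - V*G)]
  have hRV : V^2*G^2/(4*α) + V*(2*F) ≤ R*V := by
    have e : R*V = V^2*G^2/(2*α) + 2*F*V := by
      rw [hR]; field_simp
    have h4 : V^2*G^2/(4*α) ≤ V^2*G^2/(2*α) := by
      apply div_le_div_of_nonneg_left (by positivity) (by linarith) (by linarith)
    linarith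
  linarith [hdrift, hsplit, hb1, hfo, hb3, hyoung, hRV]
end

section
/- (Queue bound) Suppose V is a positive integer, α > 0, the decisions are produced by the algorithm with parameters V and α, and the Slater condition holds with constant η > 0 and Slater vector s ∈ 𝒳. Define δ = √k·(F + DG), R = VG²/(2α) + 2F, B = k(F + GD)²/2, and θ = max[ δ, (B + RV)/(ηV) + αD²/(ηV(V+1)) + δ(V+2)/(2V) ]. Then ‖Q(t)‖ ≤ θV for all slots t ∈ {0,1,2,…}. -/
open scoped RealInnerProductSpace

lemma gauss_sum_real (n : ℕ) :
    ∑ j ∈ Finset.range n, ((n : ℝ) - j) = n * (n + 1) / 2 := by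
  induction n with
  | zero => simp
  | succ n ih =>
    rw [Finset.sum_range_succ]
    have h : ∀ j ∈ Finset.range n, ((n : ℝ) + 1 - j) = ((n : ℝ) - j) + 1 := by
      intro j _; ring
    push_cast
    rw [Finset.sum_congr rfl h, Finset.sum_add_distrib, ih, Finset.sum_const,
      Finset.card_range]
    simp
    ring

lemma euclid_norm_sqrt {k : ℕ} (v : Fin k → ℝ) :
    Real.sqrt (∑ i, v i ^ 2) = ‖(WithLp.equiv 2 (Fin k → ℝ)).symm v‖ := by
  rw [EuclideanSpace.norm_eq]
  simp [sq_abs]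

lemma sqrt_sum_sq_sub_le {k : ℕ} (v w : Fin k → ℝ) :
    |Real.sqrt (∑ i, v i ^ 2) - Real.sqrt (∑ i, w i ^ 2)|
      ≤ Real.sqrt (∑ i, (v i - w i) ^ 2) := by
  rw [euclid_norm_sqrt, euclid_norm_sqrt, euclid_norm_sqrt]
  refine le_trans (abs_norm_sub_norm_le _ _) (le_of_eq ?_)
  congr 1

lemma pushback_aux {E : Type*} [NormedAddCommGroup E] [InnerProductSpace ℝ E]
    {𝒳 : Set E} (hcvx : Convex ℝ 𝒳) (c w : E) {α : ℝ} (hα : 0 < α)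
    {xs : E} (hxs : xs ∈ 𝒳)
    (hmin : ∀ x ∈ 𝒳, ⟪c, xs⟫ + α * ‖xs - w‖^2 ≤ ⟪c, x⟫ + α * ‖x - w‖^2)
    {y : E} (hy : y ∈ 𝒳) :
    ⟪c, xs⟫ + α * ‖xs - w‖^2 + α * ‖y - xs‖^2 ≤ ⟪c, y⟫ + α * ‖y - w‖^2 := by
  set d := y - xs with hd
  have key : ∀ lam : ℝ, 0 ≤ lam → lam ≤ 1 →
      0 ≤ lam * (⟪c, d⟫ + 2*α*⟪xs - w, d⟫) + lam^2 * (α * ‖d‖^2) := by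
    intro lam h0 h1
    have hz : xs + lam • d ∈ 𝒳 := by
      have h2 := hcvx hxs hy (by linarith : (0:ℝ) ≤ 1 - lam) h0 (by ring)
      convert h2 using 1
      rw [hd]
      module
    have h2 := hmin _ hz
    have e1 : ⟪c, xs + lam • d⟫ = ⟪c, xs⟫ + lam * ⟪c, d⟫ := by
      rw [inner_add_right, real_inner_smul_right]
    have e2 : ‖xs + lam • d - w‖^2 = ‖xs - w‖^2 + 2*(lam*⟪xs - w, d⟫) + lam^2*‖d‖^2 := by
      have e3 : xs + lam • d - w = (xs - w) + lam • d := by abel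
      rw [e3, norm_add_sq_real, real_inner_smul_right, norm_smul]
      simp [Real.norm_eq_abs]
      rw [mul_pow, sq_abs]
    rw [e1, e2] at h2
    nlinarith [h2]
  have hexp : ⟪c, y⟫ + α * ‖y - w‖^2
      = ⟪c, xs⟫ + α * ‖xs - w‖^2 + (⟪c, d⟫ + 2*α*⟪xs - w, d⟫) + α*‖d‖^2 := by
    have e3 : y - w = (xs - w) + d := by rw [hd]; abel
    have e4 : ⟪c, y⟫ = ⟪c, xs⟫ + ⟪c, d⟫ := by
      rw [hd, inner_sub_right]; ring
    rw [e3, norm_add_sq_real, e4]; ring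
  have hA : 0 ≤ ⟪c, d⟫ + 2*α*⟪xs - w, d⟫ := by
    set A := ⟪c, d⟫ + 2*α*⟪xs - w, d⟫ with hA'
    set b := α * ‖d‖^2 with hb
    have hbnn : 0 ≤ b := by positivity
    by_contra hneg
    push_neg at hneg
    rcases eq_or_lt_of_le hbnn with hb0 | hbpos
    · have h2 := key 1 zero_le_one le_rfl
      nlinarith
    · set lam := min 1 (-A/(2*b)) with hlam
      have hl0 : 0 < lam := lt_min one_pos (div_pos (by linarith) (by positivity))
      have hl1 : lam ≤ 1 := min_le_left _ _
      have hl2 : lam ≤ -A/(2*b) := min_le_right _ _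
      have h2 := key lam hl0.le hl1
      have h3 : lam * b ≤ -A/2 := by
        have h4 := (le_div_iff₀ (by positivity : (0:ℝ) < 2*b)).mp hl2
        nlinarith [h4]
      nlinarith [h2, hl0, h3, hneg]
  rw [hexp]
  nlinarith [hA]


set_option maxHeartbeats 3200000 in
/-- **Queue bound (Theorem 2).**  Suppose `V` is a positive integer, `α > 0`, the decisions
are produced by the algorithm with parameters `V` and `α`, and the Slater condition holds
with constant `η > 0` and Slater vector `s ∈ 𝒳`.  With `δ = √k(F + DG)`,
`R = VG²/(2α) + 2F`, `B = k(F + GD)²/2` and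
`θ = max[δ, (B + RV)/(ηV) + αD²/(ηV(V+1)) + δ(V+2)/(2V)]`, one has `‖Q(t)‖ ≤ θV` for all
slots `t`. -/
theorem stmt6 (n k : ℕ) (hk : 0 < k)
    (𝒳 : Set (EuclideanSpace ℝ (Fin n)))
    (h_ne : 𝒳.Nonempty) (h_cpt : IsCompact 𝒳) (h_cvx : Convex ℝ 𝒳)
    (D F G : ℝ) (hD : 0 ≤ D) (hF : 0 ≤ F) (hG : 0 ≤ G)
    (hdiam : ∀ x ∈ 𝒳, ∀ y ∈ 𝒳, ‖x - y‖ ≤ D)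
    (f : ℕ → EuclideanSpace ℝ (Fin n) → ℝ)
    (g : ℕ → Fin k → EuclideanSpace ℝ (Fin n) → ℝ)
    (hfconv : ∀ t, ConvexOn ℝ 𝒳 (f t))
    (hgconv : ∀ t i, ConvexOn ℝ 𝒳 (g t i))
    (hfbd : ∀ t, ∀ x ∈ 𝒳, |f t x| ≤ F)
    (hgbd : ∀ t i, ∀ x ∈ 𝒳, |g t i x| ≤ F)
    (f' : ℕ → EuclideanSpace ℝ (Fin n) → EuclideanSpace ℝ (Fin n))
    (g' : ℕ → Fin k → EuclideanSpace ℝ (Fin n) → EuclideanSpace ℝ (Fin n))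
    (hfsub : ∀ t, ∀ x ∈ 𝒳, ∀ y ∈ 𝒳, f t x + ⟪f' t x, y - x⟫ ≤ f t y)
    (hgsub : ∀ t i, ∀ x ∈ 𝒳, ∀ y ∈ 𝒳, g t i x + ⟪g' t i x, y - x⟫ ≤ g t i y)
    (hf'bd : ∀ t, ∀ x ∈ 𝒳, ‖f' t x‖ ≤ G)
    (hg'bd : ∀ t i, ∀ x ∈ 𝒳, ‖g' t i x‖ ≤ G)
    (X : ℕ → EuclideanSpace ℝ (Fin n)) (hX : ∀ t, X t ∈ 𝒳)
    (Q : ℕ → Fin k → ℝ)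
    (hQ0 : ∀ i, Q 0 i = 0) (hQ1 : ∀ i, Q 1 i = 0)
    (hQrec : ∀ t i, Q (t + 2) i =
      max (Q (t + 1) i + g t i (X t) + ⟪g' t i (X t), X (t + 1) - X t⟫) 0)
    (V : ℕ) (hV : 0 < V) (α : ℝ) (hα : 0 < α)
    (halg : ∀ t, ∀ x ∈ 𝒳,
      ⟪(V : ℝ) • f' t (X t) + ∑ i, Q (t + 1) i • g' t i (X t), X (t + 1)⟫ +
          α * ‖X (t + 1) - X t‖ ^ 2 ≤
        ⟪(V : ℝ) • f' t (X t) + ∑ i, Q (t + 1) i • g' t i (X t), x⟫ + α * ‖x - X t‖ ^ 2)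
    (η : ℝ) (hη : 0 < η) (s : EuclideanSpace ℝ (Fin n)) (hs : s ∈ 𝒳)
    (hslater : ∀ t i, g t i s ≤ -η)
    (δ R B θ : ℝ)
    (hδ : δ = Real.sqrt k * (F + D * G))
    (hR : R = (V : ℝ) * G ^ 2 / (2 * α) + 2 * F)
    (hB : B = (k : ℝ) * (F + G * D) ^ 2 / 2)
    (hθ : θ = max δ ((B + R * V) / (η * V) + α * D ^ 2 / (η * V * (V + 1)) +
      δ * ((V : ℝ) + 2) / (2 * V))) :
    ∀ t : ℕ, Real.sqrt (∑ i, (Q t i) ^ 2) ≤ θ * V := by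

  -- basic positivity facts
  have hFDG : (0:ℝ) ≤ F + G * D := by positivity
  have hδnn : 0 ≤ δ := by rw [hδ]; positivity
  have hθδ : δ ≤ θ := by rw [hθ]; exact le_max_left _ _
  have hVR : (0:ℝ) < V := by exact_mod_cast hV
  obtain ⟨M, hM⟩ : ∃ M : ℝ, M = θ * (V:ℝ) := ⟨_, rfl⟩
  have hMδV : δ * V ≤ M := by
    rw [hM]; exact mul_le_mul_of_nonneg_right hθδ hVR.le
  have hMnn : 0 ≤ M := le_trans (by positivity) hMδV
  obtain ⟨Z, hZdef⟩ : ∃ Z : ℕ → ℝ, ∀ t, Z t = Real.sqrt (∑ i, (Q t i) ^ 2) :=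
    ⟨_, fun _ => rfl⟩
  simp only [← hZdef, ← hM]
  have hZnn : ∀ t, 0 ≤ Z t := fun t => (hZdef t) ▸ Real.sqrt_nonneg _
  have hZsq : ∀ t, (Z t)^2 = ∑ i, (Q t i)^2 := fun t => by
    rw [hZdef t]
    exact Real.sq_sqrt (Finset.sum_nonneg fun i _ => sq_nonneg _)
  have hZ0 : Z 0 = 0 := by rw [hZdef]; simp [hQ0]
  have hZ1 : Z 1 = 0 := by rw [hZdef]; simp [hQ1]
  -- nonnegativity of queues
  have hQnn : ∀ t i, 0 ≤ Q t i := by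
    intro t
    induction t using Nat.strong_induction_on with
    | _ t ih =>
      match t with
      | 0 => intro i; rw [hQ0]
      | 1 => intro i; rw [hQ1]
      | (t+2) => intro i; rw [hQrec]; exact le_max_right _ _
  -- bound on the per-slot queue argument
  have hgt : ∀ t i, |g t i (X t) + ⟪g' t i (X t), X (t+1) - X t⟫| ≤ F + G * D := by
    intro t i
    have h1 : |g t i (X t)| ≤ F := hgbd t i _ (hX t)
    have h2 : |⟪g' t i (X t), X (t+1) - X t⟫| ≤ G * D := by
      calc |⟪g' t i (X t), X (t+1) - X t⟫| ≤ ‖g' t i (X t)‖ * ‖X (t+1) - X t‖ :=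
            abs_real_inner_le_norm _ _
        _ ≤ G * D := mul_le_mul (hg'bd t i _ (hX t)) (hdiam _ (hX _) _ (hX _))
            (norm_nonneg _) hG
    calc |g t i (X t) + ⟪g' t i (X t), X (t+1) - X t⟫|
        ≤ |g t i (X t)| + |⟪g' t i (X t), X (t+1) - X t⟫| := abs_add_le _ _
      _ ≤ F + G * D := add_le_add h1 h2
  -- one-step variation of Q components
  have hQstep : ∀ t i, |Q (t+2) i - Q (t+1) i| ≤ F + G * D := by
    intro t i
    rw [hQrec t i, add_assoc]
    set a := Q (t+1) i with ha
    set u := g t i (X t) + ⟪g' t i (X t), X (t+1) - X t⟫ with hu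
    have hann : 0 ≤ a := hQnn _ _
    have hub : |u| ≤ F + G * D := hgt t i
    rcases le_or_gt 0 (a + u) with h | h
    · rw [max_eq_left h]; simpa using hub
    · rw [max_eq_right h.le]
      rw [abs_le] at hub ⊢
      constructor <;> nlinarith [hub.1, hub.2]
  -- one-step variation of Z
  have hZstep : ∀ t, |Z (t+1) - Z t| ≤ δ := by
    intro t
    match t with
    | 0 => rw [hZ0, hZ1]; simpa using hδnn
    | (t+1) =>
      have habs := sqrt_sum_sq_sub_le (fun i => Q (t+2) i) (fun i => Q (t+1) i)
      rw [hZdef, hZdef]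
      refine le_trans habs ?_
      rw [hδ]
      have hsum : ∑ i, (Q (t+2) i - Q (t+1) i)^2 ≤ (k:ℝ) * (F + G * D)^2 := by
        calc ∑ i, (Q (t+2) i - Q (t+1) i)^2 ≤ ∑ _i : Fin k, (F + G * D)^2 :=
              Finset.sum_le_sum fun i _ => by
                have h5 := abs_le.mp (hQstep t i)
                exact sq_le_sq' (by linarith [h5.1]) h5.2
          _ = (k:ℝ) * (F + G * D)^2 := by
              rw [Finset.sum_const, Finset.card_univ, Fintype.card_fin]; ring
      calc Real.sqrt (∑ i, (Q (t+2) i - Q (t+1) i)^2)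
          ≤ Real.sqrt ((k:ℝ) * (F + G * D)^2) := Real.sqrt_le_sqrt hsum
        _ = Real.sqrt k * (F + D * G) := by
            rw [Real.sqrt_mul (Nat.cast_nonneg k), Real.sqrt_sq hFDG]
            ring
  have hZup : ∀ t, Z (t+1) ≤ Z t + δ := fun t => by
    have := abs_le.mp (hZstep t); linarith [this.1, this.2]
  have hZdown : ∀ t, Z t ≤ Z (t+1) + δ := fun t => by
    have := abs_le.mp (hZstep t); linarith [this.1, this.2]
  have hZlin : ∀ m : ℕ, Z (1+m) ≤ δ * m := by
    intro m
    induction m with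
    | zero => simp [hZ1]
    | succ m ih =>
      have h1 : (1:ℕ) + (m+1) = (1+m) + 1 := by omega
      rw [h1]
      have h2 := hZup (1+m)
      push_cast
      linarith
  have hfwd : ∀ a m : ℕ, Z (a+m) ≤ Z a + δ * m := by
    intro a m
    induction m with
    | zero => simp
    | succ m ih =>
      have h2 := hZup (a+m)
      have h3 : a+(m+1) = (a+m)+1 := by omega
      rw [h3]
      push_cast
      linarith
  -- key per-slot drift inequality
  have key_drift : ∀ t : ℕ, (1/2)*(Z (t+2))^2 ≤ (1/2)*(Z (t+1))^2 + (B + R*(V:ℝ))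
      - η * Z (t+1) + α*‖s - X t‖^2 - α*‖s - X (t+1)‖^2 := by
    intro t
    have hx0 := hX t
    have hx1 := hX (t+1)
    obtain ⟨u, hu⟩ : ∃ u : Fin k → ℝ,
        ∀ i, u i = g t i (X t) + ⟪g' t i (X t), X (t+1) - X t⟫ := ⟨_, fun _ => rfl⟩
    have ha : (Z (t+2))^2 ≤ ∑ i, (Q (t+1) i + u i)^2 := by
      rw [hZsq]
      refine Finset.sum_le_sum fun i _ => ?_
      rw [hQrec t i, add_assoc, ← hu i]
      rcases le_or_gt 0 (Q (t+1) i + u i) with h | h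
      · rw [max_eq_left h]
      · rw [max_eq_right h.le]
        simpa using sq_nonneg (Q (t+1) i + u i)
    have hexp : ∑ i, (Q (t+1) i + u i)^2
        = (Z (t+1))^2 + 2*(∑ i, Q (t+1) i * u i) + ∑ i, (u i)^2 := by
      rw [hZsq]
      rw [Finset.sum_congr rfl (fun i _ => by
        show (Q (t+1) i + u i)^2 = (Q (t+1) i)^2 + 2*(Q (t+1) i * u i) + (u i)^2
        ring)]
      rw [Finset.sum_add_distrib, Finset.sum_add_distrib, ← Finset.mul_sum]
    have husq : ∑ i, (u i)^2 ≤ 2*B := by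
      rw [hB]
      have : ∑ i, (u i)^2 ≤ ∑ _i : Fin k, (F + G*D)^2 :=
        Finset.sum_le_sum fun i _ => by
          rw [hu i]
          have h1 := abs_le.mp (hgt t i)
          exact sq_le_sq' (by linarith [h1.1]) h1.2
      calc ∑ i, (u i)^2 ≤ ∑ _i : Fin k, (F + G*D)^2 := this
        _ = 2*((k:ℝ)*(F + G*D)^2/2) := by
            rw [Finset.sum_const, Finset.card_univ, Fintype.card_fin]; ring
    -- the S bound
    obtain ⟨c, hc⟩ : ∃ c : EuclideanSpace ℝ (Fin n),
        c = (V:ℝ) • f' t (X t) + ∑ i, Q (t+1) i • g' t i (X t) := ⟨_, rfl⟩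
    have hpush := pushback_aux h_cvx c (X t) hα hx1
      (fun x hx => by rw [hc]; exact halg t x hx) hs
    have hcin : ∀ v : EuclideanSpace ℝ (Fin n),
        ⟪c, v⟫ = (V:ℝ)*⟪f' t (X t), v⟫ + ∑ i, Q (t+1) i * ⟪g' t i (X t), v⟫ := by
      intro v
      rw [hc, inner_add_left, sum_inner, real_inner_smul_left]
      congr 1
      exact Finset.sum_congr rfl fun i _ => real_inner_smul_left _ _ _
    have hSsplit : ∑ i, Q (t+1) i * u i
        = (∑ i, Q (t+1) i * (g t i (X t) + ⟪g' t i (X t), s - X t⟫))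
          + (⟪c, X (t+1) - s⟫ - (V:ℝ)*⟪f' t (X t), X (t+1) - s⟫) := by
      rw [hcin]
      have e1 : ∀ i : Fin k, Q (t+1) i * u i
          = Q (t+1) i * (g t i (X t) + ⟪g' t i (X t), s - X t⟫)
            + Q (t+1) i * ⟪g' t i (X t), X (t+1) - s⟫ := by
        intro i
        have e2 : ⟪g' t i (X t), X (t+1) - X t⟫
            = ⟪g' t i (X t), s - X t⟫ + ⟪g' t i (X t), X (t+1) - s⟫ := by
          rw [← inner_add_right]
          congr 1
          abel
        rw [hu i, e2]
        ring
      rw [Finset.sum_congr rfl (fun i _ => e1 i), Finset.sum_add_distrib]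
      ring
    have hZleS : Z (t+1) ≤ ∑ i, Q (t+1) i := by
      have h1 : ∑ i, (Q (t+1) i)^2 ≤ (∑ i, Q (t+1) i)^2 :=
        Finset.sum_sq_le_sq_sum_of_nonneg fun i _ => hQnn _ _
      rw [hZdef]
      calc Real.sqrt (∑ i, (Q (t+1) i)^2) ≤ Real.sqrt ((∑ i, Q (t+1) i)^2) :=
            Real.sqrt_le_sqrt h1
        _ = ∑ i, Q (t+1) i := Real.sqrt_sq (Finset.sum_nonneg fun i _ => hQnn _ _)
    have hterm1 : ∑ i, Q (t+1) i * (g t i (X t) + ⟪g' t i (X t), s - X t⟫)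
        ≤ -η * Z (t+1) := by
      have h1 : ∑ i, Q (t+1) i * (g t i (X t) + ⟪g' t i (X t), s - X t⟫)
          ≤ ∑ i, Q (t+1) i * (-η) := by
        refine Finset.sum_le_sum fun i _ => ?_
        refine mul_le_mul_of_nonneg_left ?_ (hQnn _ _)
        calc g t i (X t) + ⟪g' t i (X t), s - X t⟫ ≤ g t i s := hgsub t i _ hx0 s hs
          _ ≤ -η := hslater t i
      calc ∑ i, Q (t+1) i * (g t i (X t) + ⟪g' t i (X t), s - X t⟫)
          ≤ ∑ i, Q (t+1) i * (-η) := h1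
        _ = -η * ∑ i, Q (t+1) i := by rw [← Finset.sum_mul]; ring
        _ ≤ -η * Z (t+1) := mul_le_mul_of_nonpos_left hZleS (by linarith)
    have hterm2 : ⟪c, X (t+1) - s⟫ ≤ α*‖s - X t‖^2 - α*‖X (t+1) - X t‖^2
        - α*‖s - X (t+1)‖^2 := by
      have e := inner_sub_right (𝕜 := ℝ) c (X (t+1)) s
      linarith [hpush, e.symm.le, e.le]
    have hterm3 : -((V:ℝ)*⟪f' t (X t), X (t+1) - s⟫)
        ≤ 2*F*(V:ℝ) + (V:ℝ)*G*‖X (t+1) - X t‖ := by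
      have e : -⟪f' t (X t), X (t+1) - s⟫
          = ⟪f' t (X t), s - X t⟫ + ⟪f' t (X t), X t - X (t+1)⟫ := by
        rw [← inner_add_right, ← inner_neg_right]
        congr 1
        abel
      have h1 : ⟪f' t (X t), s - X t⟫ ≤ f t s - f t (X t) := by
        linarith [hfsub t (X t) hx0 s hs]
      have h2 : f t s - f t (X t) ≤ 2*F := by
        have := abs_le.mp (hfbd t s hs)
        have := abs_le.mp (hfbd t (X t) hx0)
        linarith [this.1, this.2]
      have h3 : ⟪f' t (X t), X t - X (t+1)⟫ ≤ G * ‖X (t+1) - X t‖ := by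
        calc ⟪f' t (X t), X t - X (t+1)⟫ ≤ ‖f' t (X t)‖ * ‖X t - X (t+1)‖ :=
              real_inner_le_norm _ _
          _ = ‖f' t (X t)‖ * ‖X (t+1) - X t‖ := by rw [norm_sub_rev]
          _ ≤ G * ‖X (t+1) - X t‖ :=
              mul_le_mul_of_nonneg_right (hf'bd t _ hx0) (norm_nonneg _)
      have h4 : -⟪f' t (X t), X (t+1) - s⟫ ≤ 2*F + G*‖X (t+1) - X t‖ := by
        rw [e]; linarith
      calc -((V:ℝ)*⟪f' t (X t), X (t+1) - s⟫)
          = (V:ℝ) * (-⟪f' t (X t), X (t+1) - s⟫) := by ring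
        _ ≤ (V:ℝ) * (2*F + G*‖X (t+1) - X t‖) :=
            mul_le_mul_of_nonneg_left h4 hVR.le
        _ = 2*F*(V:ℝ) + (V:ℝ)*G*‖X (t+1) - X t‖ := by ring
    have hterm4 : (V:ℝ)*G*‖X (t+1) - X t‖ - α*‖X (t+1) - X t‖^2
        ≤ (V:ℝ)^2*G^2/(2*α) := by
      rw [le_div_iff₀ (by positivity : (0:ℝ) < 2*α)]
      nlinarith [sq_nonneg (2*α*‖X (t+1) - X t‖ - (V:ℝ)*G), sq_nonneg ((V:ℝ)*G), hα]
    have hRV : R*(V:ℝ) = (V:ℝ)^2*G^2/(2*α) + 2*F*(V:ℝ) := by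
      rw [hR]; field_simp
    have hS : ∑ i, Q (t+1) i * u i ≤ -η * Z (t+1) + R*(V:ℝ)
        + α*‖s - X t‖^2 - α*‖s - X (t+1)‖^2 := by
      rw [hSsplit, hRV]
      nlinarith [hterm1, hterm2, hterm3, hterm4]
    nlinarith [ha, hexp.le, hexp.ge, husq, hS]
  -- window drift inequality
  have hwin : ∀ u m : ℕ, (1/2)*(Z (u+1+m))^2 - (1/2)*(Z (u+1))^2
      ≤ m*(B + R*(V:ℝ)) - η * ∑ j ∈ Finset.range m, Z (u+1+j)
        + α*‖s - X u‖^2 - α*‖s - X (u+m)‖^2 := by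
    intro u m
    induction m with
    | zero => simp
    | succ m ih =>
      have hd := key_drift (u+m)
      have e1 : u+1+(m+1) = (u+m)+2 := by omega
      have e2 : u+1+m = (u+m)+1 := by omega
      rw [e1, Finset.sum_range_succ, e2]
      rw [e2] at ih
      have e3 : u+(m+1) = (u+m)+1 := by omega
      rw [e3]
      push_cast
      nlinarith [ih, hd]
  -- Slater-margin numeric inequality
  have hM2 : ((V:ℝ)+1)*(B + R*(V:ℝ)) + α*D^2 + η*δ*((V:ℝ)+1)*((V:ℝ)+2)/2
      ≤ η*((V:ℝ)+1)*M := by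
    have hθ2 : (B + R * V) / (η * V) + α * D ^ 2 / (η * V * (V + 1)) +
        δ * ((V : ℝ) + 2) / (2 * V) ≤ θ := by
      rw [hθ]; exact le_max_right _ _
    have hMge : ((B + R * V) / (η * V) + α * D ^ 2 / (η * V * (V + 1)) +
        δ * ((V : ℝ) + 2) / (2 * V)) * V ≤ M := by
      rw [hM]; exact mul_le_mul_of_nonneg_right hθ2 hVR.le
    have hkey : η*((V:ℝ)+1)*(((B + R * V) / (η * V) + α * D ^ 2 / (η * V * (V + 1)) +
        δ * ((V : ℝ) + 2) / (2 * V)) * V)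
        = ((V:ℝ)+1)*(B + R*(V:ℝ)) + α*D^2 + η*δ*((V:ℝ)+1)*((V:ℝ)+2)/2 := by
      field_simp
    rw [← hkey]
    have hpos : (0:ℝ) < η*((V:ℝ)+1) := by positivity
    nlinarith [hMge, hpos]
  -- main strong induction
  intro t
  induction t using Nat.strong_induction_on with
  | _ t ih =>
    rcases le_or_gt t (V+1) with hle | hgt2
    · match t, hle with
      | 0, _ => rw [hZ0]; exact hMnn
      | (m+1), hle =>
        have h1 : (m:ℝ) ≤ (V:ℝ) := by exact_mod_cast Nat.lt_succ_iff.mp (by omega)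
        calc Z (m+1) = Z (1+m) := by rw [Nat.add_comm]
          _ ≤ δ * m := hZlin m
          _ ≤ δ * V := mul_le_mul_of_nonneg_left h1 hδnn
          _ ≤ M := hMδV
    · obtain ⟨w, hw⟩ : ∃ w, t = w + V + 2 := ⟨t - V - 2, by omega⟩
      subst hw
      rcases le_or_gt (Z (w+V+1)) (M - δ) with hcase | hcase
      · have := hZup (w+V+1)
        have e : w+V+1+1 = w+V+2 := by omega
        rw [e] at this
        linarith
      · -- window argument
        have hIH0 : Z (w+1) ≤ M := ih (w+1) (by omega)
        have hwinV := hwin w (V+1)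
        have e1 : w+1+(V+1) = w+V+2 := by omega
        rw [e1] at hwinV
        have hlow : ∀ j ∈ Finset.range (V+1), M - δ*((V:ℝ)+1-j) ≤ Z (w+1+j) := by
          intro j hj
          have hjV : j ≤ V := by
            have := Finset.mem_range.mp hj; omega
          have hb := hfwd (w+1+j) (V-j)
          have e2 : w+1+j+(V-j) = w+V+1 := by omega
          rw [e2] at hb
          have e3 : ((V-j:ℕ):ℝ) = (V:ℝ) - j := by
            push_cast [Nat.cast_sub hjV]; ring
          rw [e3] at hb
          have h6 : M - δ < Z (w+V+1) := hcase
          linarith [hb, h6]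
        have hsumlow : ((V:ℝ)+1)*M - δ*(((V:ℝ)+1)*((V:ℝ)+2)/2)
            ≤ ∑ j ∈ Finset.range (V+1), Z (w+1+j) := by
          have h1 : ∑ j ∈ Finset.range (V+1), (M - δ*((V:ℝ)+1-j))
              ≤ ∑ j ∈ Finset.range (V+1), Z (w+1+j) :=
            Finset.sum_le_sum hlow
          have h2 : ∑ j ∈ Finset.range (V+1), (M - δ*((V:ℝ)+1-j))
              = ((V:ℝ)+1)*M - δ*(((V:ℝ)+1)*((V:ℝ)+2)/2) := by
            rw [Finset.sum_sub_distrib, Finset.sum_const, Finset.card_range,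
              ← Finset.mul_sum]
            have h3 := gauss_sum_real (V+1)
            push_cast at h3 ⊢
            rw [h3]
            ring
          linarith
        have hXw : ‖s - X w‖^2 ≤ D^2 := by
          have h1 : ‖s - X w‖ ≤ D := hdiam s hs _ (hX w)
          nlinarith [norm_nonneg (s - X w)]
        have hfin : (1/2)*(Z (w+V+2))^2 ≤ (1/2)*M^2 := by
          have h1 : (0:ℝ) ≤ ‖s - X (w+(V+1))‖^2 := sq_nonneg _
          have h2 : ((V:ℕ)+1:ℝ) = (V:ℝ)+1 := by push_cast; ring
          push_cast at hwinV
          nlinarith [hwinV, hsumlow, hXw, hIH0, hM2, hη, hZnn (w+1), h1]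
        nlinarith [hfin, hZnn (w+V+2), hMnn]
end

section
/- (Per-slot movement bound) Fix a slot t ∈ {1,2,3,…} and let θ ≥ 0 be any constant with ‖Q(t)‖ ≤ θV. If X_t is produced by the algorithm with parameters V > 0 and α > 0 (i.e. X_t minimizes [V f_{t−1}'(X_{t−1}) + Σ_{i=1}^k Q_i(t) g_{t−1,i}'(X_{t−1})]ᵀ x + α‖x − X_{t−1}‖² over x ∈ 𝒳), then ‖X_t − X_{t−1}‖ ≤ VG(1 + θ√k)/(2α). -/
/-!
Since `Xprev ∈ 𝒳` and `𝒳` is convex, comparing the minimizer `Xt` with the points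
`Xt + ε (Xprev - Xt)` and letting `ε → 0` gives the first-order condition
`2α‖Xt - Xprev‖² ≤ ⟪d, Xprev - Xt⟫`, where `d` is the linear coefficient; with Cauchy–Schwarz this
is `‖Xt - Xprev‖ ≤ ‖d‖ / (2α)`. Finally `‖d‖ ≤ VG + G ∑ |Qᵢ| ≤ VG + G √k ‖Q‖ ≤ VG(1 + θ√k)`.
-/

open scoped RealInnerProductSpace
open Finset Filter Topology

theorem sum_abs_le_sqrt_card_mul_sqrt_sum_sq {ι : Type*} (s : Finset ι) (f : ι → ℝ) :
    ∑ i ∈ s, |f i| ≤ √(#s : ℝ) * √(∑ i ∈ s, f i ^ 2) := by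
  rw [← Real.sqrt_mul (Nat.cast_nonneg _)]
  apply Real.le_sqrt_of_sq_le
  simpa only [sq_abs] using sq_sum_le_card_mul_sum_sq (s := s) (f := fun i => |f i|)

theorem norm_smul_add_sum_smul_le {ι E : Type*} [Fintype ι] [SeminormedAddCommGroup E]
    [NormedSpace ℝ E] {V G θ : ℝ} (hV : 0 ≤ V) {Q : ι → ℝ} (hQ : √(∑ i, Q i ^ 2) ≤ θ * V)
    {f : E} {g : ι → E} (hf : ‖f‖ ≤ G) (hg : ∀ i, ‖g i‖ ≤ G) :
    ‖V • f + ∑ i, Q i • g i‖ ≤ V * G * (1 + θ * √(Fintype.card ι : ℝ)) := by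
  have hG : 0 ≤ G := (norm_nonneg f).trans hf
  have hQ₁ : ∑ i, |Q i| ≤ √(Fintype.card ι : ℝ) * (θ * V) :=
    (sum_abs_le_sqrt_card_mul_sqrt_sum_sq univ Q).trans
      (mul_le_mul_of_nonneg_left hQ (Real.sqrt_nonneg _))
  have hVf : ‖V • f‖ ≤ V * G := by
    rw [norm_smul, Real.norm_of_nonneg hV]
    exact mul_le_mul_of_nonneg_left hf hV
  have hQg : ‖∑ i, Q i • g i‖ ≤ ∑ i, |Q i| * G := norm_sum_le_of_le _ fun i _ => by
    rw [norm_smul, Real.norm_eq_abs]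
    exact mul_le_mul_of_nonneg_left (hg i) (abs_nonneg _)
  calc ‖V • f + ∑ i, Q i • g i‖ ≤ ‖V • f‖ + ‖∑ i, Q i • g i‖ := norm_add_le _ _
    _ ≤ V * G + (∑ i, |Q i|) * G := by rw [Finset.sum_mul]; exact add_le_add hVf hQg
    _ ≤ V * G + √(Fintype.card ι : ℝ) * (θ * V) * G := by gcongr
    _ = V * G * (1 + θ * √(Fintype.card ι : ℝ)) := by ring

theorem le_of_forall_two_sub_mul_le {a b : ℝ} (h : ∀ ε ∈ Set.Ioo (0 : ℝ) 1, (2 - ε) * b ≤ a) :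
    2 * b ≤ a := by
  have hlim : Tendsto (fun ε : ℝ => (2 - ε) * b) (𝓝[>] 0) (𝓝 (2 * b)) := by
    have : Continuous fun ε : ℝ => (2 - ε) * b := by fun_prop
    simpa using (this.tendsto 0).mono_left nhdsWithin_le_nhds
  exact le_of_tendsto hlim (eventually_of_mem (Ioo_mem_nhdsGT one_pos) h)

section Proximal

variable {E : Type*} [NormedAddCommGroup E] [InnerProductSpace ℝ E] {s : Set E} {d p x : E}
  {α : ℝ}

theorem IsMinOn.two_mul_sq_norm_sub_le_inner (hs : Convex ℝ s) (hp : p ∈ s) (hx : x ∈ s)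
    (hmin : IsMinOn (fun y => ⟪d, y⟫ + α * ‖y - p‖ ^ 2) s x) :
    2 * α * ‖x - p‖ ^ 2 ≤ ⟪d, p - x⟫ := by
  rw [mul_assoc]
  refine le_of_forall_two_sub_mul_le fun ε ⟨hε₀, hε₁⟩ => ?_
  have hmem : x + ε • (p - x) ∈ s := hs.add_smul_sub_mem hx hp ⟨hε₀.le, hε₁.le⟩
  have hle := isMinOn_iff.1 hmin _ hmem
  have hsub : x + ε • (p - x) - p = (1 - ε) • (x - p) := by module
  simp only [hsub, inner_add_right, inner_smul_right, norm_smul, mul_pow, Real.norm_eq_abs,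
    sq_abs] at hle
  have hscaled : ε * ((2 - ε) * (α * ‖x - p‖ ^ 2)) ≤ ε * ⟪d, p - x⟫ := by linarith
  exact le_of_mul_le_mul_left hscaled hε₀

theorem IsMinOn.norm_sub_le_norm_div (hs : Convex ℝ s) (hp : p ∈ s) (hx : x ∈ s) (hα : 0 < α)
    (hmin : IsMinOn (fun y => ⟪d, y⟫ + α * ‖y - p‖ ^ 2) s x) :
    ‖x - p‖ ≤ ‖d‖ / (2 * α) := by
  rw [le_div_iff₀ (by positivity)]
  rcases (norm_nonneg (x - p)).eq_or_lt with h₀ | hpos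
  · rw [← h₀, zero_mul]
    exact norm_nonneg d
  · have hCS : ⟪d, p - x⟫ ≤ ‖d‖ * ‖x - p‖ := by
      rw [← norm_sub_rev]
      exact real_inner_le_norm d (p - x)
    have hkey := hmin.two_mul_sq_norm_sub_le_inner hs hp hx
    nlinarith

end Proximal

theorem stmt7_general (n k : ℕ)
    (𝒳 : Set (EuclideanSpace ℝ (Fin n)))
    (h_cvx : Convex ℝ 𝒳)
    (G : ℝ)
    (V α : ℝ) (hV : 0 < V) (hα : 0 < α)
    (Q : Fin k → ℝ)
    (θ : ℝ)
    (hQbd : Real.sqrt (∑ i, (Q i) ^ 2) ≤ θ * V)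
    (Xprev : EuclideanSpace ℝ (Fin n)) (hXprev : Xprev ∈ 𝒳)
    (fv : EuclideanSpace ℝ (Fin n)) (hfv : ‖fv‖ ≤ G)
    (gv : Fin k → EuclideanSpace ℝ (Fin n)) (hgv : ∀ i, ‖gv i‖ ≤ G)
    (Xt : EuclideanSpace ℝ (Fin n)) (hXt : Xt ∈ 𝒳)
    (halg : ∀ x ∈ 𝒳,
      ⟪V • fv + ∑ i, Q i • gv i, Xt⟫ + α * ‖Xt - Xprev‖ ^ 2 ≤
        ⟪V • fv + ∑ i, Q i • gv i, x⟫ + α * ‖x - Xprev‖ ^ 2) :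
    ‖Xt - Xprev‖ ≤ V * G * (1 + θ * Real.sqrt k) / (2 * α) := by
  calc ‖Xt - Xprev‖ ≤ ‖V • fv + ∑ i, Q i • gv i‖ / (2 * α) :=
        (isMinOn_iff.2 halg).norm_sub_le_norm_div h_cvx hXprev hXt hα
    _ ≤ V * G * (1 + θ * Real.sqrt k) / (2 * α) := by
        gcongr
        simpa using norm_smul_add_sum_smul_le hV.le hQbd hfv hgv

/-- **Per-slot movement bound.**  Fix a slot and let `θ ≥ 0` satisfy `‖Q(t)‖ ≤ θV`.  If
`X_t` minimizes `[V f_{t−1}'(X_{t−1}) + Σ_i Q_i(t) g_{t−1,i}'(X_{t−1})]ᵀ x + α‖x − X_{t−1}‖²`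
over `x ∈ 𝒳`, then `‖X_t − X_{t−1}‖ ≤ VG(1 + θ√k)/(2α)`.  Here `Xprev` plays the role of
`X_{t−1}`, `Xt` of `X_t`, `fv` of `f_{t−1}'(X_{t−1})` and `gv i` of `g_{t−1,i}'(X_{t−1})`. -/
theorem stmt7 (n k : ℕ) (hk : 0 < k)
    (𝒳 : Set (EuclideanSpace ℝ (Fin n)))
    (h_ne : 𝒳.Nonempty) (h_cpt : IsCompact 𝒳) (h_cvx : Convex ℝ 𝒳)
    (G : ℝ) (hG : 0 ≤ G)
    (V α : ℝ) (hV : 0 < V) (hα : 0 < α)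
    (Q : Fin k → ℝ) (hQnn : ∀ i, 0 ≤ Q i)
    (θ : ℝ) (hθnn : 0 ≤ θ)
    (hQbd : Real.sqrt (∑ i, (Q i) ^ 2) ≤ θ * V)
    (Xprev : EuclideanSpace ℝ (Fin n)) (hXprev : Xprev ∈ 𝒳)
    (fv : EuclideanSpace ℝ (Fin n)) (hfv : ‖fv‖ ≤ G)
    (gv : Fin k → EuclideanSpace ℝ (Fin n)) (hgv : ∀ i, ‖gv i‖ ≤ G)
    (Xt : EuclideanSpace ℝ (Fin n)) (hXt : Xt ∈ 𝒳)
    (halg : ∀ x ∈ 𝒳,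
      ⟪V • fv + ∑ i, Q i • gv i, Xt⟫ + α * ‖Xt - Xprev‖ ^ 2 ≤
        ⟪V • fv + ∑ i, Q i • gv i, x⟫ + α * ‖x - Xprev‖ ^ 2) :
    ‖Xt - Xprev‖ ≤ V * G * (1 + θ * Real.sqrt k) / (2 * α) :=
  stmt7_general n k 𝒳 h_cvx G V α hV hα Q θ hQbd Xprev hXprev fv hfv gv hgv Xt hXt halg
end

section
/- (Constraint bound) Suppose the Slater condition holds with constant η > 0 and Slater vector s ∈ 𝒳, V is a positive integer, α = V², and the decisions are produced by the algorithm with parameters V and α. Define δ = √k·(F + DG), R = VG²/(2α) + 2F, B = k(F + GD)²/2, and θ = max[ δ, (B + RV)/(ηV) + αD²/(ηV(V+1)) + δ(V+2)/(2V) ]. Then for each i ∈ {1,…,k} and all integers T > 0: (1/T)·Σ_{t=0}^{T−1} g_{t,i}(X_t) ≤ θV/T + G²/(4V) + G²(1 + θ√k)²/(4V). -/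
open scoped RealInnerProductSpace

/-!
The proximal step satisfies the three-point inequality; tested at the Slater point `s`, it makes
`½‖Q‖²` a Lyapunov function with drift at most `B + RV - η‖Q(t)‖` plus a telescoping term
`α(‖s - X_{t-1}‖² - ‖s - X_t‖²)`, while `‖Q‖` grows by at most `δ` per step. Summing the drift
over a window of `V + 1` steps shows that `‖Q‖` cannot end the window above both its value at the
start and the level `θV`; by strong induction `‖Q(t)‖ ≤ θV` for all `t`. Then the decisions move
by at most `G(1 + θ√k)/(2V)` per step, each `g_{t,i}(X_t)` is at most the queue increment
`Q_i(t+2) - Q_i(t+1)` plus `G‖X_{t+1} - X_t‖`, and the increments telescope to `Q_i(T+1) ≤ θV`.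
-/

open Filter Topology in
theorem nonneg_of_forall_nonneg_add_mul {a b : ℝ}
    (h : ∀ ε ∈ Set.Ioc (0 : ℝ) 1, 0 ≤ a + ε * b) : 0 ≤ a := by
  have hlim : Tendsto (fun ε : ℝ => a + ε * b) (𝓝[>] 0) (𝓝 a) := by
    have hcont : Continuous fun ε : ℝ => a + ε * b := by fun_prop
    simpa using (hcont.tendsto 0).mono_left nhdsWithin_le_nhds
  exact ge_of_tendsto hlim (eventually_of_mem (Ioc_mem_nhdsGT one_pos) h)

theorem abs_add_inner_le {E : Type*} [NormedAddCommGroup E] [InnerProductSpace ℝ E]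
    {u F G D : ℝ} {w v : E} (hu : |u| ≤ F) (hw : ‖w‖ ≤ G) (hv : ‖v‖ ≤ D) :
    |u + ⟪w, v⟫| ≤ F + G * D :=
  (abs_add_le _ _).trans (add_le_add hu ((abs_real_inner_le_norm w v).trans
    (mul_le_mul hw hv (norm_nonneg v) ((norm_nonneg w).trans hw))))

namespace EuclideanSpace

variable {ι : Type*} [Fintype ι]

theorem norm_le_sqrt_card_mul {v : EuclideanSpace ℝ ι} {c : ℝ} (hc : 0 ≤ c)
    (hv : ∀ i, |v i| ≤ c) : ‖v‖ ≤ √(Fintype.card ι) * c := by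
  rw [← Real.sqrt_sq hc, ← Real.sqrt_mul (Nat.cast_nonneg _), EuclideanSpace.norm_eq]
  refine Real.sqrt_le_sqrt ?_
  calc ∑ i, ‖v i‖ ^ 2 ≤ ∑ _i : ι, c ^ 2 := Finset.sum_le_sum fun i _ =>
        pow_le_pow_left₀ (norm_nonneg _) ((Real.norm_eq_abs _).trans_le (hv i)) 2
    _ = Fintype.card ι * c ^ 2 := by simp

theorem norm_le_sum_of_nonneg {v : EuclideanSpace ℝ ι} (hv : ∀ i, 0 ≤ v i) :
    ‖v‖ ≤ ∑ i, v i := by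
  refine le_of_pow_le_pow_left₀ two_ne_zero (Finset.sum_nonneg fun i _ => hv i) ?_
  rw [real_norm_sq_eq]
  exact Finset.sum_sq_le_sq_sum_of_nonneg fun i _ => hv i

theorem sum_le_sqrt_card_mul_norm (v : EuclideanSpace ℝ ι) :
    ∑ i, v i ≤ √(Fintype.card ι) * ‖v‖ := by
  refine le_of_abs_le (abs_le_of_sq_le_sq ?_ (by positivity))
  rw [mul_pow, Real.sq_sqrt (Nat.cast_nonneg _), real_norm_sq_eq]
  exact sq_sum_le_card_mul_sum_sq

variable {v w u : EuclideanSpace ℝ ι} {c : ℝ}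

theorem norm_queue_update_le (hv : ∀ i, 0 ≤ v i) (hw : ∀ i, w i = max (v i + u i) 0)
    (hc : 0 ≤ c) (hu : ∀ i, |u i| ≤ c) : ‖w‖ ≤ ‖v‖ + √(Fintype.card ι) * c := by
  have hdiff : ‖w - v‖ ≤ √(Fintype.card ι) * c := by
    refine norm_le_sqrt_card_mul hc fun i => ?_
    have := abs_max_sub_max_le_abs (v i + u i) (v i) 0
    rw [max_eq_left (hv i), add_sub_cancel_left] at this
    simpa [hw] using this.trans (hu i)
  linarith [norm_le_norm_add_norm_sub' w v, norm_sub_rev w v]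

theorem sq_norm_queue_update_le (hw : ∀ i, w i = max (v i + u i) 0) (hu : ∀ i, |u i| ≤ c) :
    ‖w‖ ^ 2 ≤ ‖v‖ ^ 2 + 2 * ∑ i, v i * u i + Fintype.card ι * c ^ 2 := by
  have hcoord : ∀ i, w i ^ 2 ≤ v i ^ 2 + 2 * (v i * u i) + c ^ 2 := fun i => by
    have hsq : u i ^ 2 ≤ c ^ 2 := by
      rw [← sq_abs]; exact pow_le_pow_left₀ (abs_nonneg _) (hu i) 2
    rw [hw]
    rcases le_total (v i + u i) 0 with hneg | hpos
    · rw [max_eq_right hneg]; nlinarith [sq_nonneg (v i + u i)]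
    · rw [max_eq_left hpos]; nlinarith
  simp only [real_norm_sq_eq]
  calc ∑ i, w i ^ 2 ≤ ∑ i, (v i ^ 2 + 2 * (v i * u i) + c ^ 2) :=
        Finset.sum_le_sum fun i _ => hcoord i
    _ = _ := by simp [Finset.sum_add_distrib, Finset.mul_sum]

end EuclideanSpace

section Prox

variable {E : Type*} [NormedAddCommGroup E] [InnerProductSpace ℝ E] {C : Set E}
  {ι : Type*} [Fintype ι] {d x₀ x x' y s a : E} {b : ι → E} {c : ι → ℝ} {V α η G L M : ℝ}

theorem IsMinOn.inner_sub_le_of_prox (hC : Convex ℝ C)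
    (hmin : IsMinOn (fun z => ⟪d, z⟫ + α * ‖z - x₀‖ ^ 2) C x) (hx : x ∈ C) (hy : y ∈ C) :
    ⟪d, x - y⟫ ≤ α * (‖y - x₀‖ ^ 2 - ‖x - x₀‖ ^ 2 - ‖y - x‖ ^ 2) := by
  have hfirst_order : 0 ≤ ⟪d, y - x⟫ + 2 * α * ⟪x - x₀, y - x⟫ := by
    refine nonneg_of_forall_nonneg_add_mul (b := α * ‖y - x‖ ^ 2) fun ε hε => ?_
    have hz := isMinOn_iff.mp hmin _ (hC.add_smul_sub_mem hx hy (Set.Ioc_subset_Icc_self hε))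
    have hexp : x + ε • (y - x) - x₀ = (x - x₀) + ε • (y - x) := by abel
    rw [hexp, norm_add_sq_real, inner_add_right, real_inner_smul_right, real_inner_smul_right,
      norm_smul, Real.norm_eq_abs, mul_pow, sq_abs] at hz
    refine le_of_mul_le_mul_left ?_ hε.1
    nlinarith
  have hpolar : 2 * ⟪x - x₀, y - x⟫ = ‖y - x₀‖ ^ 2 - ‖x - x₀‖ ^ 2 - ‖y - x‖ ^ 2 := by
    have := norm_add_sq_real (x - x₀) (y - x)
    rw [sub_add_sub_cancel'] at this
    linarith
  rw [← neg_sub y x, inner_neg_right, ← hpolar]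
  linarith

theorem IsMinOn.norm_sub_le_of_prox (hC : Convex ℝ C)
    (hmin : IsMinOn (fun z => ⟪d, z⟫ + α * ‖z - x₀‖ ^ 2) C x) (hx : x ∈ C) (hx₀ : x₀ ∈ C)
    (hα : 0 < α) : ‖x - x₀‖ ≤ ‖d‖ / (2 * α) := by
  have hthree := hmin.inner_sub_le_of_prox hC hx hx₀
  rw [sub_self, norm_zero, norm_sub_rev x₀ x] at hthree
  have hcs := neg_le_of_abs_le (abs_real_inner_le_norm d (x - x₀))
  rw [le_div_iff₀ (by positivity)]
  nlinarith [norm_nonneg (x - x₀), norm_nonneg d]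

theorem IsMinOn.drift_plus_penalty_le (hC : Convex ℝ C) {Q : ι → ℝ}
    (hmin : IsMinOn (fun z => ⟪V • a + ∑ j, Q j • b j, z⟫ + α * ‖z - x‖ ^ 2) C x')
    (hx' : x' ∈ C) (hs : s ∈ C) (hα : 0 < α) (hV : 0 ≤ V) (hQ : ∀ j, 0 ≤ Q j)
    (ha : ‖a‖ ≤ G) (has : ⟪a, s - x⟫ ≤ M) (hslater : ∀ j, c j + ⟪b j, s - x⟫ ≤ -η) :
    ∑ j, Q j * (c j + ⟪b j, x' - x⟫) ≤
      -η * ∑ j, Q j + V * M + V ^ 2 * G ^ 2 / (4 * α) +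
        α * (‖s - x‖ ^ 2 - ‖s - x'‖ ^ 2) := by
  have hthree := hmin.inner_sub_le_of_prox hC hx' hs
  have hsplit : ∑ j, Q j * (c j + ⟪b j, x' - x⟫) =
      ∑ j, Q j * (c j + ⟪b j, s - x⟫) + ⟪V • a + ∑ j, Q j • b j, x' - s⟫
        - V * ⟪a, x' - x⟫ + V * ⟪a, s - x⟫ := by
    have hx's : x' - s = (x' - x) - (s - x) := by abel
    simp only [inner_add_left, sum_inner, real_inner_smul_left, hx's, inner_sub_right, mul_add,
      mul_sub, Finset.sum_add_distrib, Finset.sum_sub_distrib]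
    ring
  have hslack : ∑ j, Q j * (c j + ⟪b j, s - x⟫) ≤ -η * ∑ j, Q j := by
    rw [Finset.mul_sum]
    exact Finset.sum_le_sum fun j _ => by nlinarith [hQ j, hslater j]
  have hmove : -(V * ⟪a, x' - x⟫) - α * ‖x' - x‖ ^ 2 ≤ V ^ 2 * G ^ 2 / (4 * α) := by
    have hG : -⟪a, x' - x⟫ ≤ G * ‖x' - x‖ := ((neg_le_abs _).trans
      (abs_real_inner_le_norm a (x' - x))).trans (mul_le_mul_of_nonneg_right ha (norm_nonneg _))
    rw [le_div_iff₀ (by positivity)]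
    nlinarith [sq_nonneg (V * G - 2 * α * ‖x' - x‖), mul_le_mul_of_nonneg_left hG hV]
  nlinarith [mul_le_mul_of_nonneg_left has hV]

variable {v w : EuclideanSpace ℝ ι}

theorem queue_drift_le (hC : Convex ℝ C)
    (hmin : IsMinOn (fun z => ⟪V • a + ∑ j, v j • b j, z⟫ + α * ‖z - x‖ ^ 2) C x')
    (hx' : x' ∈ C) (hs : s ∈ C) (hα : 0 < α) (hV : 0 ≤ V) (hη : 0 ≤ η) (hv : ∀ j, 0 ≤ v j)
    (hw : ∀ j, w j = max (v j + (c j + ⟪b j, x' - x⟫)) 0)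
    (hlin : ∀ j, |c j + ⟪b j, x' - x⟫| ≤ L) (ha : ‖a‖ ≤ G) (has : ⟪a, s - x⟫ ≤ M)
    (hslater : ∀ j, c j + ⟪b j, s - x⟫ ≤ -η) :
    ‖w‖ ^ 2 / 2 - ‖v‖ ^ 2 / 2 ≤
      Fintype.card ι * L ^ 2 / 2 + V * M + V ^ 2 * G ^ 2 / (4 * α) - η * ‖v‖ +
        (α * ‖s - x‖ ^ 2 - α * ‖s - x'‖ ^ 2) := by
  have hsq := EuclideanSpace.sq_norm_queue_update_le
    (u := WithLp.toLp 2 fun j => c j + ⟪b j, x' - x⟫) hw hlin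
  have hdpp := hmin.drift_plus_penalty_le hC hx' hs hα hV hv ha has hslater
  have hsum := mul_le_mul_of_nonneg_left (EuclideanSpace.norm_le_sum_of_nonneg hv) hη
  nlinarith

theorem IsMinOn.norm_sub_le_of_prox_of_norm_le (hC : Convex ℝ C)
    (hmin : IsMinOn (fun z => ⟪V • a + ∑ j, v j • b j, z⟫ + α * ‖z - x‖ ^ 2) C x')
    (hx' : x' ∈ C) (hx : x ∈ C) (hα : 0 < α) (hV : 0 ≤ V) (hv : ∀ j, 0 ≤ v j)
    (ha : ‖a‖ ≤ G) (hb : ∀ j, ‖b j‖ ≤ G) :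
    ‖x' - x‖ ≤ G * (V + √(Fintype.card ι) * ‖v‖) / (2 * α) := by
  refine (hmin.norm_sub_le_of_prox hC hx' hx hα).trans
    (div_le_div_of_nonneg_right ?_ (by positivity))
  have hG : 0 ≤ G := (norm_nonneg a).trans ha
  calc ‖V • a + ∑ j, v j • b j‖ ≤ V * G + ∑ j, v j * G := by
        refine (norm_add_le _ _).trans (add_le_add ?_
          ((norm_sum_le _ _).trans (Finset.sum_le_sum fun j _ => ?_)))
        · rw [norm_smul, Real.norm_of_nonneg hV]
          exact mul_le_mul_of_nonneg_left ha hV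
        · rw [norm_smul, Real.norm_of_nonneg (hv j)]
          exact mul_le_mul_of_nonneg_left (hb j) (hv j)
    _ ≤ G * (V + √(Fintype.card ι) * ‖v‖) := by
        rw [← Finset.sum_mul]
        nlinarith [EuclideanSpace.sum_le_sqrt_card_mul_norm v]

end Prox

theorem sum_range_cast_sub (m : ℕ) :
    ∑ j ∈ Finset.range m, ((m : ℝ) - j) = m * (m + 1) / 2 := by
  induction m with
  | zero => simp
  | succ m ih =>
    rw [Finset.sum_range_succ']
    push_cast
    simp only [add_sub_add_right_eq_sub, ih]
    ring

section Drift

variable {p φ : ℕ → ℝ} {δ η K M : ℝ} {W : ℕ}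

theorem le_add_mul_of_forall_succ_le (hstep : ∀ u, p (u + 1) ≤ p u + δ) (a m : ℕ) :
    p (a + m) ≤ p a + δ * m := by
  induction m with
  | zero => simp
  | succ m ih =>
    rw [← add_assoc]
    push_cast
    linarith [hstep (a + m)]

theorem drift_sum_le
    (hdrift : ∀ u, p (u + 1) ^ 2 / 2 - p u ^ 2 / 2 ≤ K - η * p u + (φ u - φ (u + 1)))
    (a m : ℕ) :
    p (a + m) ^ 2 / 2 - p a ^ 2 / 2 ≤
      m * K + (φ a - φ (a + m)) - η * ∑ j ∈ Finset.range m, p (a + j) := by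
  induction m with
  | zero => simp
  | succ m ih =>
    rw [Finset.sum_range_succ, ← add_assoc]
    push_cast
    linarith [hdrift (a + m)]

/-- If `p` rose across the window to above the level, it would be at least
`p (a + W) - δ (W - j)` at each step `a + j` of the window, and the summed drift would then force
`p (a + W) ^ 2 < p a ^ 2`. -/
theorem le_or_le_of_drift (hη : 0 < η) (hW : 0 < W) (hp : ∀ u, 0 ≤ p u)
    (hstep : ∀ u, p (u + 1) ≤ p u + δ) (hφ : ∀ u, 0 ≤ φ u) (hφM : ∀ u, φ u ≤ M)
    (hdrift : ∀ u, p (u + 1) ^ 2 / 2 - p u ^ 2 / 2 ≤ K - η * p u + (φ u - φ (u + 1)))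
    (a : ℕ) : p (a + W) ≤ p a ∨ p (a + W) ≤ K / η + M / (η * W) + δ * (W + 1) / 2 := by
  by_contra! ⟨hrise, hhigh⟩
  have hwindow : ∀ j ∈ Finset.range W, p (a + W) - δ * ((W : ℝ) - j) ≤ p (a + j) := by
    intro j hj
    have hjW := Finset.mem_range.mp hj
    have := le_add_mul_of_forall_succ_le hstep (a + j) (W - j)
    rw [add_assoc, Nat.add_sub_cancel' hjW.le, Nat.cast_sub hjW.le] at this
    linarith
  have hsum := Finset.sum_le_sum hwindow
  rw [Finset.sum_sub_distrib, ← Finset.mul_sum, sum_range_cast_sub, Finset.sum_const,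
    Finset.card_range, nsmul_eq_mul] at hsum
  have htel := drift_sum_le hdrift a W
  have hWr : (0 : ℝ) < W := by exact_mod_cast hW
  have hlevel : (K / η + M / (η * W) + δ * (W + 1) / 2) * (η * W) =
      W * K + M + η * (δ * (W * (W + 1) / 2)) := by
    field_simp
  nlinarith [hp a, hφ (a + W), hφM a, mul_lt_mul_of_pos_right hhigh (mul_pos hη hWr),
    mul_le_mul_of_nonneg_left hsum hη.le]

theorem forall_le_of_drift (hη : 0 < η) (hW : 0 < W) (hδ : 0 ≤ δ) (hp : ∀ u, 0 ≤ p u)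
    (hp0 : p 0 = 0) (hstep : ∀ u, p (u + 1) ≤ p u + δ) (hφ : ∀ u, 0 ≤ φ u)
    (hφM : ∀ u, φ u ≤ M)
    (hdrift : ∀ u, p (u + 1) ^ 2 / 2 - p u ^ 2 / 2 ≤ K - η * p u + (φ u - φ (u + 1)))
    {b : ℝ} (hb_start : δ * (W - 1) ≤ b)
    (hb_level : K / η + M / (η * W) + δ * (W + 1) / 2 ≤ b) (u : ℕ) : p u ≤ b := by
  induction u using Nat.strong_induction_on with
  | _ u ih =>
    rcases lt_or_ge u W with hu | hu
    · have hstart := le_add_mul_of_forall_succ_le hstep 0 u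
      have huW : (u : ℝ) ≤ W - 1 := by
        rw [le_sub_iff_add_le]; exact_mod_cast hu
      rw [zero_add, hp0] at hstart
      nlinarith
    · obtain ⟨a, rfl⟩ := Nat.exists_eq_add_of_le' hu
      rcases le_or_le_of_drift hη hW hp hstep hφ hφM hdrift a with h | h
      · exact h.trans (ih a (by omega))
      · exact h.trans hb_level

end Drift

theorem average_le_of_le_succ_sub_add {a r : ℕ → ℝ} {K M : ℝ}
    (h : ∀ t, a t ≤ r (t + 1) - r t + K) (hr0 : r 0 = 0) {T : ℕ} (hT : 0 < T)
    (hrT : r T ≤ M) : (1 / T) * ∑ t ∈ Finset.range T, a t ≤ M / T + K := by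
  have hsum : ∑ t ∈ Finset.range T, a t ≤ r T - r 0 + T * K :=
    calc ∑ t ∈ Finset.range T, a t ≤ ∑ t ∈ Finset.range T, (r (t + 1) - r t + K) :=
          Finset.sum_le_sum fun t _ => h t
      _ = r T - r 0 + T * K := by
          rw [Finset.sum_add_distrib, Finset.sum_range_sub, Finset.sum_const, Finset.card_range,
            nsmul_eq_mul]
  have hTr : (0 : ℝ) < T := by exact_mod_cast hT
  rw [one_div_mul_eq_div, div_le_iff₀ hTr, add_mul, div_mul_cancel₀ _ hTr.ne']
  linarith

section Algorithm

variable {E : Type*} [NormedAddCommGroup E] [InnerProductSpace ℝ E] {C : Set E}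
  {ι : Type*} {f : ℕ → E → ℝ} {g : ℕ → ι → E → ℝ} {f' : ℕ → E → E}
  {g' : ℕ → ι → E → E} {X : ℕ → E} {Q : ℕ → ι → ℝ} {s : E} {V : ℕ} {α η D F G : ℝ}

theorem virtualQueue_nonneg (hQ1 : ∀ i, Q 1 i = 0)
    (hQrec : ∀ t i, Q (t + 2) i =
      max (Q (t + 1) i + g t i (X t) + ⟪g' t i (X t), X (t + 1) - X t⟫) 0)
    (t : ℕ) (i : ι) : 0 ≤ Q (t + 1) i := by
  cases t with
  | zero => exact (hQ1 i).ge
  | succ t => rw [hQrec]; exact le_max_right _ _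

theorem constraint_le_virtualQueue_sub (hX : ∀ t, X t ∈ C)
    (hg'bd : ∀ t i, ∀ x ∈ C, ‖g' t i x‖ ≤ G)
    (hQrec : ∀ t i, Q (t + 2) i =
      max (Q (t + 1) i + g t i (X t) + ⟪g' t i (X t), X (t + 1) - X t⟫) 0)
    (t : ℕ) (i : ι) : g t i (X t) ≤ Q (t + 2) i - Q (t + 1) i + G * ‖X (t + 1) - X t‖ := by
  have hcs : -⟪g' t i (X t), X (t + 1) - X t⟫ ≤ G * ‖X (t + 1) - X t‖ :=
    ((neg_le_abs _).trans (abs_real_inner_le_norm _ _)).trans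
      (mul_le_mul_of_nonneg_right (hg'bd t i _ (hX t)) (norm_nonneg _))
  linarith [hQrec t i ▸ le_max_left (Q (t + 1) i + g t i (X t) +
    ⟪g' t i (X t), X (t + 1) - X t⟫) 0]

variable [Fintype ι]

theorem norm_virtualQueue_le (hC : Convex ℝ C) (hX : ∀ t, X t ∈ C) (hs : s ∈ C)
    (hdiam : ∀ x ∈ C, ∀ y ∈ C, ‖x - y‖ ≤ D) (hD : 0 ≤ D) (hF : 0 ≤ F) (hG : 0 ≤ G)
    (hfbd : ∀ t, ∀ x ∈ C, |f t x| ≤ F) (hgbd : ∀ t i, ∀ x ∈ C, |g t i x| ≤ F)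
    (hfsub : ∀ t, ∀ x ∈ C, ∀ y ∈ C, f t x + ⟪f' t x, y - x⟫ ≤ f t y)
    (hgsub : ∀ t i, ∀ x ∈ C, ∀ y ∈ C, g t i x + ⟪g' t i x, y - x⟫ ≤ g t i y)
    (hf'bd : ∀ t, ∀ x ∈ C, ‖f' t x‖ ≤ G) (hg'bd : ∀ t i, ∀ x ∈ C, ‖g' t i x‖ ≤ G)
    (hQ1 : ∀ i, Q 1 i = 0)
    (hQrec : ∀ t i, Q (t + 2) i =
      max (Q (t + 1) i + g t i (X t) + ⟪g' t i (X t), X (t + 1) - X t⟫) 0)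
    (halg : ∀ t, IsMinOn (fun z => ⟪(V : ℝ) • f' t (X t) + ∑ i, Q (t + 1) i • g' t i (X t), z⟫ +
      α * ‖z - X t‖ ^ 2) C (X (t + 1)))
    (hα : 0 < α) (hη : 0 < η) (hslater : ∀ t i, g t i s ≤ -η) {K b : ℝ}
    (hK : Fintype.card ι * (F + G * D) ^ 2 / 2 + V * (2 * F) + V ^ 2 * G ^ 2 / (4 * α) ≤ K)
    (hb_start : √(Fintype.card ι) * (F + G * D) * V ≤ b)
    (hb_level : K / η + α * D ^ 2 / (η * (V + 1)) +
      √(Fintype.card ι) * (F + G * D) * (V + 2) / 2 ≤ b)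
    (t : ℕ) : ‖(WithLp.toLp 2 (Q (t + 1)) : EuclideanSpace ℝ ι)‖ ≤ b := by
  set q : ℕ → EuclideanSpace ℝ ι := fun t => WithLp.toLp 2 (Q (t + 1))
  have hQ := virtualQueue_nonneg hQ1 hQrec
  have hlin : ∀ t j, |g t j (X t) + ⟪g' t j (X t), X (t + 1) - X t⟫| ≤ F + G * D := fun t j =>
    abs_add_inner_le (hgbd t j _ (hX t)) (hg'bd t j _ (hX t)) (hdiam _ (hX _) _ (hX t))
  have hupd : ∀ t j,
      q (t + 1) j = max (q t j + (g t j (X t) + ⟪g' t j (X t), X (t + 1) - X t⟫)) 0 :=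
    fun t j => by simp [q, hQrec, add_assoc]
  have hstep : ∀ t, ‖q (t + 1)‖ ≤ ‖q t‖ + √(Fintype.card ι) * (F + G * D) := fun t =>
    EuclideanSpace.norm_queue_update_le (hQ t) (hupd t) (by positivity)
      (u := WithLp.toLp 2 fun j => g t j (X t) + ⟪g' t j (X t), X (t + 1) - X t⟫) (hlin t)
  have hdrift : ∀ t, ‖q (t + 1)‖ ^ 2 / 2 - ‖q t‖ ^ 2 / 2 ≤
      K - η * ‖q t‖ + (α * ‖s - X t‖ ^ 2 - α * ‖s - X (t + 1)‖ ^ 2) := fun t => by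
    have hfs : ⟪f' t (X t), s - X t⟫ ≤ 2 * F := by
      linarith [hfsub t _ (hX t) s hs, abs_le.mp (hfbd t _ (hX t)), abs_le.mp (hfbd t s hs)]
    have hgs : ∀ j, g t j (X t) + ⟪g' t j (X t), s - X t⟫ ≤ -η := fun j =>
      (hgsub t j _ (hX t) s hs).trans (hslater t j)
    have := queue_drift_le (v := q t) (w := q (t + 1)) hC (halg t) (hX _) hs hα
      (Nat.cast_nonneg V) hη.le (hQ t) (hupd t) (hlin t) (hf'bd t _ (hX t)) hfs hgs
    linarith
  have hφ : ∀ t, α * ‖s - X t‖ ^ 2 ≤ α * D ^ 2 := fun t => by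
    gcongr; exact hdiam _ hs _ (hX t)
  refine forall_le_of_drift (W := V + 1) (φ := fun t => α * ‖s - X t‖ ^ 2) hη V.succ_pos
    (by positivity) (fun _ => norm_nonneg _) ?_ hstep (fun _ => by positivity) hφ hdrift ?_ ?_ t
  · simp [q, show Q 1 = 0 from funext hQ1]
  · simpa using hb_start
  · push_cast
    convert hb_level using 3
    ring

end Algorithm

theorem stmt8_general (n k : ℕ)
    (𝒳 : Set (EuclideanSpace ℝ (Fin n)))
    (h_cvx : Convex ℝ 𝒳)
    (D F G : ℝ) (hD : 0 ≤ D) (hF : 0 ≤ F) (hG : 0 ≤ G)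
    (hdiam : ∀ x ∈ 𝒳, ∀ y ∈ 𝒳, ‖x - y‖ ≤ D)
    (f : ℕ → EuclideanSpace ℝ (Fin n) → ℝ)
    (g : ℕ → Fin k → EuclideanSpace ℝ (Fin n) → ℝ)
    (hfbd : ∀ t, ∀ x ∈ 𝒳, |f t x| ≤ F)
    (hgbd : ∀ t i, ∀ x ∈ 𝒳, |g t i x| ≤ F)
    (f' : ℕ → EuclideanSpace ℝ (Fin n) → EuclideanSpace ℝ (Fin n))
    (g' : ℕ → Fin k → EuclideanSpace ℝ (Fin n) → EuclideanSpace ℝ (Fin n))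
    (hfsub : ∀ t, ∀ x ∈ 𝒳, ∀ y ∈ 𝒳, f t x + ⟪f' t x, y - x⟫ ≤ f t y)
    (hgsub : ∀ t i, ∀ x ∈ 𝒳, ∀ y ∈ 𝒳, g t i x + ⟪g' t i x, y - x⟫ ≤ g t i y)
    (hf'bd : ∀ t, ∀ x ∈ 𝒳, ‖f' t x‖ ≤ G)
    (hg'bd : ∀ t i, ∀ x ∈ 𝒳, ‖g' t i x‖ ≤ G)
    (X : ℕ → EuclideanSpace ℝ (Fin n)) (hX : ∀ t, X t ∈ 𝒳)
    (Q : ℕ → Fin k → ℝ)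
    (hQ1 : ∀ i, Q 1 i = 0)
    (hQrec : ∀ t i, Q (t + 2) i =
      max (Q (t + 1) i + g t i (X t) + ⟪g' t i (X t), X (t + 1) - X t⟫) 0)
    (V : ℕ) (hV : 0 < V) (α : ℝ) (hαdef : α = (V : ℝ) ^ 2)
    (halg : ∀ t, ∀ x ∈ 𝒳,
      ⟪(V : ℝ) • f' t (X t) + ∑ i, Q (t + 1) i • g' t i (X t), X (t + 1)⟫ +
          α * ‖X (t + 1) - X t‖ ^ 2 ≤
        ⟪(V : ℝ) • f' t (X t) + ∑ i, Q (t + 1) i • g' t i (X t), x⟫ + α * ‖x - X t‖ ^ 2)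
    (η : ℝ) (hη : 0 < η) (s : EuclideanSpace ℝ (Fin n)) (hs : s ∈ 𝒳)
    (hslater : ∀ t i, g t i s ≤ -η)
    (δ R B θ : ℝ)
    (hδ : δ = Real.sqrt k * (F + D * G))
    (hR : R = (V : ℝ) * G ^ 2 / (2 * α) + 2 * F)
    (hB : B = (k : ℝ) * (F + G * D) ^ 2 / 2)
    (hθ : θ = max δ ((B + R * V) / (η * V) + α * D ^ 2 / (η * V * (V + 1)) +
      δ * ((V : ℝ) + 2) / (2 * V))) :
    ∀ (i : Fin k) (T : ℕ), 0 < T →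
      (1 / (T : ℝ)) * ∑ t ∈ Finset.range T, g t i (X t) ≤
        θ * V / T + G ^ 2 / (4 * V) + G ^ 2 * (1 + θ * Real.sqrt k) ^ 2 / (4 * V) := by
  intro i T hT
  have hVr : (0 : ℝ) < V := by exact_mod_cast hV
  have hα : 0 < α := by rw [hαdef]; positivity
  have hδ' : √(Fintype.card (Fin k)) * (F + G * D) = δ := by
    rw [Fintype.card_fin, hδ, mul_comm G D]
  have hbound : ∀ t, ‖(WithLp.toLp 2 (Q (t + 1)) : EuclideanSpace ℝ (Fin k))‖ ≤ θ * V := by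
    refine norm_virtualQueue_le h_cvx hX hs hdiam hD hF hG hfbd hgbd hfsub hgsub hf'bd hg'bd hQ1
      hQrec (fun t => isMinOn_iff.mpr (halg t)) hα hη hslater (K := B + R * V) ?_ ?_ ?_
    · have hRV : R * V = V ^ 2 * G ^ 2 / (2 * α) + V * (2 * F) := by rw [hR]; ring
      have : (V : ℝ) ^ 2 * G ^ 2 / (4 * α) ≤ V ^ 2 * G ^ 2 / (2 * α) := by gcongr; norm_num
      rw [Fintype.card_fin, hB, hRV]
      linarith
    · rw [hδ']
      exact mul_le_mul_of_nonneg_right (hθ ▸ le_max_left _ _) hVr.le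
    · refine le_of_eq_of_le ?_ (mul_le_mul_of_nonneg_right (hθ ▸ le_max_right _ _) hVr.le)
      rw [hδ']
      field_simp
  have hmove : ∀ t, G * ‖X (t + 1) - X t‖ ≤
      G ^ 2 / (4 * V) + G ^ 2 * (1 + θ * √k) ^ 2 / (4 * V) := fun t => by
    have hstep := (isMinOn_iff.mpr (halg t)).norm_sub_le_of_prox_of_norm_le
      (v := WithLp.toLp 2 (Q (t + 1))) h_cvx (hX _) (hX t) hα hVr.le
      (virtualQueue_nonneg hQ1 hQrec t) (hf'bd t _ (hX t)) (fun j => hg'bd t j _ (hX t))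
    rw [Fintype.card_fin] at hstep
    calc G * ‖X (t + 1) - X t‖ ≤ G * (G * (V + √k * (θ * V)) / (2 * α)) := by
          gcongr; exact hstep.trans (by gcongr; exact hbound t)
      _ = G ^ 2 / (4 * V) + G ^ 2 * (1 + θ * √k) ^ 2 / (4 * V) -
          G ^ 2 * (θ * √k) ^ 2 / (4 * V) := by rw [hαdef]; field_simp; ring
      _ ≤ _ := sub_le_self _ (by positivity)
  rw [add_assoc]
  exact average_le_of_le_succ_sub_add (r := fun t => Q (t + 1) i)
    (fun t => (constraint_le_virtualQueue_sub hX hg'bd hQrec t i).trans (by linarith [hmove t]))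
    (hQ1 i) hT ((Real.le_norm_self _).trans ((PiLp.norm_apply_le _ i).trans (hbound T)))

/-- **Constraint bound (Theorem 3).**  Suppose the Slater condition holds with `η > 0` and
Slater vector `s ∈ 𝒳`, `V` is a positive integer, `α = V²`, and the decisions are produced
by the algorithm with parameters `V` and `α`.  With `δ = √k(F + DG)`, `R = VG²/(2α) + 2F`,
`B = k(F + GD)²/2` and `θ = max[δ, (B + RV)/(ηV) + αD²/(ηV(V+1)) + δ(V+2)/(2V)]`, for each
`i ∈ {1,…,k}` and all integers `T > 0`:
`(1/T)·Σ_{t=0}^{T−1} g_{t,i}(X_t) ≤ θV/T + G²/(4V) + G²(1 + θ√k)²/(4V)`. -/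
theorem stmt8 (n k : ℕ) (hk : 0 < k)
    (𝒳 : Set (EuclideanSpace ℝ (Fin n)))
    (h_ne : 𝒳.Nonempty) (h_cpt : IsCompact 𝒳) (h_cvx : Convex ℝ 𝒳)
    (D F G : ℝ) (hD : 0 ≤ D) (hF : 0 ≤ F) (hG : 0 ≤ G)
    (hdiam : ∀ x ∈ 𝒳, ∀ y ∈ 𝒳, ‖x - y‖ ≤ D)
    (f : ℕ → EuclideanSpace ℝ (Fin n) → ℝ)
    (g : ℕ → Fin k → EuclideanSpace ℝ (Fin n) → ℝ)
    (hfconv : ∀ t, ConvexOn ℝ 𝒳 (f t))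
    (hgconv : ∀ t i, ConvexOn ℝ 𝒳 (g t i))
    (hfbd : ∀ t, ∀ x ∈ 𝒳, |f t x| ≤ F)
    (hgbd : ∀ t i, ∀ x ∈ 𝒳, |g t i x| ≤ F)
    (f' : ℕ → EuclideanSpace ℝ (Fin n) → EuclideanSpace ℝ (Fin n))
    (g' : ℕ → Fin k → EuclideanSpace ℝ (Fin n) → EuclideanSpace ℝ (Fin n))
    (hfsub : ∀ t, ∀ x ∈ 𝒳, ∀ y ∈ 𝒳, f t x + ⟪f' t x, y - x⟫ ≤ f t y)
    (hgsub : ∀ t i, ∀ x ∈ 𝒳, ∀ y ∈ 𝒳, g t i x + ⟪g' t i x, y - x⟫ ≤ g t i y)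
    (hf'bd : ∀ t, ∀ x ∈ 𝒳, ‖f' t x‖ ≤ G)
    (hg'bd : ∀ t i, ∀ x ∈ 𝒳, ‖g' t i x‖ ≤ G)
    (X : ℕ → EuclideanSpace ℝ (Fin n)) (hX : ∀ t, X t ∈ 𝒳)
    (Q : ℕ → Fin k → ℝ)
    (hQ0 : ∀ i, Q 0 i = 0) (hQ1 : ∀ i, Q 1 i = 0)
    (hQrec : ∀ t i, Q (t + 2) i =
      max (Q (t + 1) i + g t i (X t) + ⟪g' t i (X t), X (t + 1) - X t⟫) 0)
    (V : ℕ) (hV : 0 < V) (α : ℝ) (hαdef : α = (V : ℝ) ^ 2)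
    (halg : ∀ t, ∀ x ∈ 𝒳,
      ⟪(V : ℝ) • f' t (X t) + ∑ i, Q (t + 1) i • g' t i (X t), X (t + 1)⟫ +
          α * ‖X (t + 1) - X t‖ ^ 2 ≤
        ⟪(V : ℝ) • f' t (X t) + ∑ i, Q (t + 1) i • g' t i (X t), x⟫ + α * ‖x - X t‖ ^ 2)
    (η : ℝ) (hη : 0 < η) (s : EuclideanSpace ℝ (Fin n)) (hs : s ∈ 𝒳)
    (hslater : ∀ t i, g t i s ≤ -η)
    (δ R B θ : ℝ)
    (hδ : δ = Real.sqrt k * (F + D * G))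
    (hR : R = (V : ℝ) * G ^ 2 / (2 * α) + 2 * F)
    (hB : B = (k : ℝ) * (F + G * D) ^ 2 / 2)
    (hθ : θ = max δ ((B + R * V) / (η * V) + α * D ^ 2 / (η * V * (V + 1)) +
      δ * ((V : ℝ) + 2) / (2 * V))) :
    ∀ (i : Fin k) (T : ℕ), 0 < T →
      (1 / (T : ℝ)) * ∑ t ∈ Finset.range T, g t i (X t) ≤
        θ * V / T + G ^ 2 / (4 * V) + G ^ 2 * (1 + θ * Real.sqrt k) ^ 2 / (4 * V) :=
  stmt8_general n k 𝒳 h_cvx D F G hD hF hG hdiam f g hfbd hgbd f' g' hfsub hgsub hf'bd hg'bd X hX Q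
    hQ1 hQrec V hV α hαdef halg η hη s hs hslater δ R B θ hδ hR hB hθ
end
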